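/- arXiv:2003.12268 — 13 statements merged into one kernel-verified Lean document; each statement's English description precedes it below -/
import Mathlib

section
/- Let f : ℝ × ℝ → ℝ be continuously differentiable and let t₀, α, h ∈ ℝ be fixed. Then the one-step map T : ℝ × ℝ → ℝ × ℝ of method (3.1), defined by T(x, v) = (x + h·v, v + h·f(x + h·v, t₀ + α·h)), is differentiable at every point and the determinant of its Fréchet derivative equals 1 at every point; in particular T preserves area (Lebesgue measure) on ℝ². -/
/-!
The map factors as a drift shear `(x, v) ↦ (x + h v, v)` followed by a kick shear
`(y, v) ↦ (y, v + h f(y, t₀ + α h))`. A shear of `E × F` along a map `g` has block unitriangular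
derivative, hence Jacobian determinant 1, and it translates each fibre by a constant, so by
Fubini it preserves any product of an s-finite measure with a translation-invariant one.
-/

open MeasureTheory

namespace LinearMap
variable {R M M' : Type*} [CommRing R] [AddCommGroup M] [AddCommGroup M'] [Module R M]
  [Module R M'] [Module.Free R M] [Module.Free R M'] [Module.Finite R M] [Module.Finite R M']

theorem det_fst_prod_snd_add_comp_fst (A : M →ₗ[R] M') :
    ((fst R M M').prod (snd R M M' + A ∘ₗ fst R M M')).det = 1 := by
  classical
  let b := Module.Free.chooseBasis R M
  let b' := Module.Free.chooseBasis R M'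
  have hmatrix : toMatrix (b.prod b') (b.prod b')
      ((fst R M M').prod (snd R M M' + A ∘ₗ fst R M M')) =
        Matrix.fromBlocks 1 0 (toMatrix b b' A) 1 := by
    ext (i | i) (j | j) <;> simp [toMatrix_apply, Matrix.one_apply, Finsupp.single_apply, eq_comm]
  rw [← det_toMatrix (b.prod b'), hmatrix, Matrix.det_fromBlocks_zero₁₂]
  simp

theorem det_fst_add_comp_snd_prod_snd (A : M' →ₗ[R] M) :
    ((fst R M M' + A ∘ₗ snd R M M').prod (snd R M M')).det = 1 := by
  have hswap : (fst R M M' + A ∘ₗ snd R M M').prod (snd R M M') =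
      (LinearEquiv.prodComm R M' M).toLinearMap ∘ₗ
        (fst R M' M).prod (snd R M' M + A ∘ₗ fst R M' M) ∘ₗ
          (LinearEquiv.prodComm R M' M).symm.toLinearMap := rfl
  rw [hswap, det_conj, det_fst_prod_snd_add_comp_fst]

end LinearMap

def shearSnd {α G : Type*} [Add G] (g : α → G) (p : α × G) : α × G := (p.1, p.2 + g p.1)

def shearFst {α G : Type*} [Add α] (g : G → α) (p : α × G) : α × G := (p.1 + g p.2, p.2)

section Measure
variable {α G : Type*} [MeasurableSpace α] [MeasurableSpace G] [Add G] [MeasurableAdd₂ G]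
  {μ : Measure α} {ν : Measure G} [SFinite μ] [SFinite ν] [ν.IsAddRightInvariant]

theorem measurePreserving_shearSnd {g : α → G} (hg : Measurable g) :
    MeasurePreserving (shearSnd g) (μ.prod ν) (μ.prod ν) :=
  (MeasurePreserving.id μ).skew_product (measurable_snd.add (hg.comp measurable_fst))
    (ae_of_all _ fun a => (measurePreserving_add_right ν (g a)).map_eq)

theorem measurePreserving_shearFst {g : α → G} (hg : Measurable g) :
    MeasurePreserving (shearFst g) (ν.prod μ) (ν.prod μ) :=
  (Measure.measurePreserving_swap.comp (measurePreserving_shearSnd hg)).comp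
    Measure.measurePreserving_swap

end Measure

section Deriv
open ContinuousLinearMap
variable {𝕜 E F : Type*} [NontriviallyNormedField 𝕜] [NormedAddCommGroup E] [NormedSpace 𝕜 E]
  [NormedAddCommGroup F] [NormedSpace 𝕜 F]

theorem HasFDerivAt.shearSnd {g : E → F} {g' : E →L[𝕜] F} {p : E × F}
    (hg : HasFDerivAt g g' p.1) :
    HasFDerivAt (shearSnd g) ((fst 𝕜 E F).prod (snd 𝕜 E F + g'.comp (fst 𝕜 E F))) p :=
  hasFDerivAt_fst.prodMk (hasFDerivAt_snd.add (hg.comp p hasFDerivAt_fst))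

theorem HasFDerivAt.shearFst {g : F → E} {g' : F →L[𝕜] E} {p : E × F}
    (hg : HasFDerivAt g g' p.2) :
    HasFDerivAt (shearFst g) ((fst 𝕜 E F + g'.comp (snd 𝕜 E F)).prod (snd 𝕜 E F)) p :=
  (hasFDerivAt_fst.add (hg.comp p hasFDerivAt_snd)).prodMk hasFDerivAt_snd

theorem det_fderiv_comp {f g : E → E} {x : E} (hg : DifferentiableAt 𝕜 g (f x))
    (hf : DifferentiableAt 𝕜 f x) :
    (fderiv 𝕜 (g ∘ f) x).det = (fderiv 𝕜 g (f x)).det * (fderiv 𝕜 f x).det := by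
  rw [fderiv_comp x hg hf]
  exact LinearMap.det_comp _ _

variable [FiniteDimensional 𝕜 E] [FiniteDimensional 𝕜 F]

theorem det_fderiv_shearSnd {g : E → F} {p : E × F} (hg : DifferentiableAt 𝕜 g p.1) :
    (fderiv 𝕜 (shearSnd g) p).det = 1 := by
  rw [hg.hasFDerivAt.shearSnd.fderiv]
  exact LinearMap.det_fst_prod_snd_add_comp_fst _

theorem det_fderiv_shearFst {g : F → E} {p : E × F} (hg : DifferentiableAt 𝕜 g p.2) :
    (fderiv 𝕜 (shearFst g) p).det = 1 := by
  rw [hg.hasFDerivAt.shearFst.fderiv]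
  exact LinearMap.det_fst_add_comp_snd_prod_snd _

end Deriv

/-- Method (3.1): the one-step map `T (x, v) = (x + h·v, v + h·f(x + h·v, t₀ + α·h))`
is everywhere differentiable, has Jacobian determinant 1 everywhere, and preserves
Lebesgue measure (area) on `ℝ²`. -/
theorem deVogelaere_method_3_1_area_preserving
    (f : ℝ × ℝ → ℝ) (hf : ContDiff ℝ 1 f) (t₀ α h : ℝ)
    (T : ℝ × ℝ → ℝ × ℝ)
    (hT : ∀ x v : ℝ, T (x, v) = (x + h * v, v + h * f (x + h * v, t₀ + α * h))) :
    (∀ p : ℝ × ℝ, DifferentiableAt ℝ T p) ∧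
    (∀ p : ℝ × ℝ, (fderiv ℝ T p).det = 1) ∧
    MeasurePreserving T volume volume := by
  set kick : ℝ → ℝ := fun y => h * f (y, t₀ + α * h)
  set drift : ℝ → ℝ := fun v => h * v
  have hT' : T = shearSnd kick ∘ shearFst drift := funext fun p => hT p.1 p.2
  have hkick : Differentiable ℝ kick := by
    have := hf.differentiable one_ne_zero
    fun_prop
  have hdrift : Differentiable ℝ drift := by fun_prop
  have hdiff_kick (p : ℝ × ℝ) : DifferentiableAt ℝ (shearSnd kick) p :=
    (hkick p.1).hasFDerivAt.shearSnd.differentiableAt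
  have hdiff_drift (p : ℝ × ℝ) : DifferentiableAt ℝ (shearFst drift) p :=
    (hdrift p.2).hasFDerivAt.shearFst.differentiableAt
  subst hT'
  refine ⟨fun p => (hdiff_kick _).comp p (hdiff_drift p), fun p => ?_, ?_⟩
  · rw [det_fderiv_comp (hdiff_kick _) (hdiff_drift p), det_fderiv_shearSnd (hkick _),
      det_fderiv_shearFst (hdrift _), mul_one]
  · -- `volume` on `ℝ × ℝ` is by definition `volume.prod volume`.
    exact (measurePreserving_shearSnd hkick.continuous.measurable).comp
      (measurePreserving_shearFst hdrift.continuous.measurable)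
end

section
/- Let f : ℝ × ℝ → ℝ be continuously differentiable and let t₀, α, h ∈ ℝ be fixed. Then the one-step map T : ℝ × ℝ → ℝ × ℝ of method (3.3), defined by T(x, v) = (x + h·v + h²·f(x, t₀ + α·h), v + h·f(x, t₀ + α·h)), is differentiable at every point and the determinant of its Fréchet derivative equals 1 at every point; in particular T preserves area (Lebesgue measure) on ℝ². -/
/-!
The map is the symplectic Euler step "kick, then drift": `T = drift h ∘ kick g` with
`g x = h · f(x, t₀ + α·h)`, where `kick g (x, v) = (x, v + g x)` and `drift h (x, v) = (x + h·v, v)`.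
Both are shears. A shear is a skew product over the identity whose fibre maps are translations, so
it preserves Lebesgue measure, and its derivative is unipotent triangular, so it has determinant 1.
-/

open MeasureTheory

theorem ContinuousLinearMap.det_prod_real (L₁ L₂ : ℝ × ℝ →L[ℝ] ℝ) :
    (L₁.prod L₂).det = L₁ (1, 0) * L₂ (0, 1) - L₁ (0, 1) * L₂ (1, 0) := by
  rw [ContinuousLinearMap.det, ← LinearMap.det_toMatrix (Module.Basis.finTwoProd ℝ),
    Matrix.det_fin_two]
  simp [LinearMap.toMatrix_apply]

theorem ContinuousLinearMap.det_comp {R M : Type*} [CommRing R] [TopologicalSpace M]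
    [AddCommGroup M] [Module R M] (A B : M →L[R] M) : (A ∘L B).det = A.det * B.det :=
  LinearMap.det_comp _ _

def kick {α G : Type*} [Add G] (g : α → G) (p : α × G) : α × G := (p.1, p.2 + g p.1)

theorem measurePreserving_kick {α G : Type*} [MeasurableSpace α] [MeasurableSpace G] [Add G]
    [MeasurableAdd₂ G] (μ : Measure α) (ν : Measure G) [SFinite μ] [SFinite ν]
    [ν.IsAddRightInvariant] {g : α → G} (hg : Measurable g) :
    MeasurePreserving (kick g) (μ.prod ν) (μ.prod ν) :=
  (MeasurePreserving.id μ).skew_product (g := fun a c => c + g a)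
    (measurable_snd.add (hg.comp measurable_fst))
    (.of_forall fun a => (measurePreserving_add_right ν (g a)).map_eq)

theorem hasFDerivAt_kick {g : ℝ → ℝ} {g' x : ℝ} (hg : HasDerivAt g g' x) (v : ℝ) :
    HasFDerivAt (kick g)
      ((ContinuousLinearMap.fst ℝ ℝ ℝ).prod (.snd ℝ ℝ ℝ + g' • .fst ℝ ℝ ℝ)) (x, v) :=
  hasFDerivAt_fst.prodMk (hasFDerivAt_snd.add (hg.comp_hasFDerivAt (x, v) hasFDerivAt_fst))

theorem differentiableAt_kick {g : ℝ → ℝ} {p : ℝ × ℝ} (hg : DifferentiableAt ℝ g p.1) :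
    DifferentiableAt ℝ (kick g) p :=
  (hasFDerivAt_kick hg.hasDerivAt p.2).differentiableAt

def drift (h : ℝ) : ℝ × ℝ →L[ℝ] ℝ × ℝ :=
  (ContinuousLinearMap.fst ℝ ℝ ℝ + h • .snd ℝ ℝ ℝ).prod (.snd ℝ ℝ ℝ)

@[simp]
theorem drift_apply (h : ℝ) (p : ℝ × ℝ) : drift h p = (p.1 + h * p.2, p.2) := rfl

theorem drift_eq_swap_kick_swap (h : ℝ) : ⇑(drift h) = Prod.swap ∘ kick (h * ·) ∘ Prod.swap :=
  rfl

theorem measurePreserving_drift (h : ℝ) : MeasurePreserving (drift h) volume volume := by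
  rw [drift_eq_swap_kick_swap, Measure.volume_eq_prod]
  exact Measure.measurePreserving_swap.comp <|
    (measurePreserving_kick volume volume (measurable_const_mul h)).comp
      Measure.measurePreserving_swap

theorem det_drift (h : ℝ) : (drift h).det = 1 := by
  simp [drift, ContinuousLinearMap.det_prod_real]

theorem det_fderiv_kick {g : ℝ → ℝ} {p : ℝ × ℝ} (hg : DifferentiableAt ℝ g p.1) :
    (fderiv ℝ (kick g) p).det = 1 := by
  rw [(hasFDerivAt_kick hg.hasDerivAt p.2).fderiv, ContinuousLinearMap.det_prod_real]
  simp

/-- Method (3.3): the one-step map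
`T (x, v) = (x + h·v + h²·f(x, t₀ + α·h), v + h·f(x, t₀ + α·h))`
is everywhere differentiable, has Jacobian determinant 1 everywhere, and preserves
Lebesgue measure (area) on `ℝ²`. -/
theorem deVogelaere_method_3_3_area_preserving
    (f : ℝ × ℝ → ℝ) (hf : ContDiff ℝ 1 f) (t₀ α h : ℝ)
    (T : ℝ × ℝ → ℝ × ℝ)
    (hT : ∀ x v : ℝ,
      T (x, v) = (x + h * v + h ^ 2 * f (x, t₀ + α * h), v + h * f (x, t₀ + α * h))) :
    (∀ p : ℝ × ℝ, DifferentiableAt ℝ T p) ∧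
    (∀ p : ℝ × ℝ, (fderiv ℝ T p).det = 1) ∧
    MeasurePreserving T volume volume := by
  set g : ℝ → ℝ := fun x => h * f (x, t₀ + α * h)
  have hg : Differentiable ℝ g :=
    ((hf.differentiable one_ne_zero).comp
      (differentiable_id.prodMk (differentiable_const _))).const_mul h
  have hT_eq : T = drift h ∘ kick g := funext fun ⟨x, v⟩ => by simp [hT, g, kick]; ring
  have hkick (p : ℝ × ℝ) : DifferentiableAt ℝ (kick g) p := differentiableAt_kick (hg p.1)
  subst hT_eq
  refine ⟨fun p => (drift h).differentiableAt.comp p (hkick p), fun p => ?_, ?_⟩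
  · rw [fderiv_comp p (drift h).differentiableAt (hkick p), ContinuousLinearMap.fderiv,
      ContinuousLinearMap.det_comp, det_drift, det_fderiv_kick (hg p.1), one_mul]
  · rw [Measure.volume_eq_prod]
    exact (measurePreserving_drift h).comp (measurePreserving_kick _ _ hg.continuous.measurable)
end

section
/- Let f : ℝ × ℝ → ℝ be continuously differentiable, α ∈ ℝ, and let x : ℝ → ℝ be three times continuously differentiable on a neighborhood of t₀ with x''(t) = f(x(t), t) there. Write x₀ = x(t₀), v₀ = x'(t₀), and for each h set v̄₁(h) = v₀ + h·f(x₀ + h·v₀, t₀ + α·h). Then, as h → 0, v̄₁(h) − x'(t₀ + h) = [ (1/2)·v₀·∂₁f(x₀, t₀) + (α − 1/2)·∂₂f(x₀, t₀) ]·h² + o(h²), where ∂₁f and ∂₂f denote the partial derivatives of f with respect to its first and second argument. -/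
/-!
The exact velocity is expanded by Taylor's formula with Peano remainder: by the differential
equation and the chain rule, `x'' = f (x t, t)` has derivative `v₀ ∂₁f + ∂₂f` at `t₀`, so
`x' (t₀ + h) = v₀ + h f₀ + h²/2 (v₀ ∂₁f + ∂₂f) + o(h²)`. The force at the predicted point is
expanded to first order by the chain rule along the line `(x₀ + h v₀, t₀ + α h)`, which gives
`h f (x̄₁, t₀ + α h) = h f₀ + h² (v₀ ∂₁f + α ∂₂f) + o(h²)`. The constant and linear terms cancel.
-/

open Asymptotics Filter Topology Metric

theorem HasDerivAt.isLittleO_taylor_two_nhds_zero {E : Type*} [NormedAddCommGroup E]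
    [NormedSpace ℝ E] {g g' : ℝ → E} {t₀ : ℝ} {M : E} (hg' : HasDerivAt g' M t₀)
    (hg : ∀ᶠ t in 𝓝 t₀, HasDerivAt g (g' t) t) :
    (fun h : ℝ => g (t₀ + h) - g t₀ - h • g' t₀ - (h ^ 2 / 2) • M) =o[𝓝 0] fun h => h ^ 2 := by
  obtain ⟨ε, hε, hgε⟩ := eventually_nhds_iff_ball.mp hg
  have hderiv : ∀ t ∈ ball t₀ ε,
      HasDerivWithinAt (fun t => g t - g t₀ - (t - t₀) • g' t₀ - ((t - t₀) ^ 2 / 2) • M)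
        (g' t - g' t₀ - (t - t₀) • M) (ball t₀ ε) t := by
    intro t ht
    have hlin := ((hasDerivAt_id t).sub_const t₀).smul_const (g' t₀)
    have hquad := ((((hasDerivAt_id t).sub_const t₀).pow 2).div_const 2).smul_const M
    refine ((((hgε t ht).sub_const (g t₀)).sub hlin).sub hquad).hasDerivWithinAt.congr_deriv ?_
    simp
  have hderiv_small : (fun t => g' t - g' t₀ - (t - t₀) • M) =o[𝓝[ball t₀ ε] t₀]
      fun t => (t - t₀) ^ 1 := by
    simpa using (hasDerivAt_iff_isLittleO.mp hg').mono nhdsWithin_le_nhds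
  have hcentred := (convex_ball t₀ ε).isLittleO_pow_succ_real (mem_ball_self hε) hderiv
    hderiv_small
  rw [nhdsWithin_eq_nhds.mpr (ball_mem_nhds t₀ hε)] at hcentred
  have hshift : Tendsto (fun h : ℝ => t₀ + h) (𝓝 0) (𝓝 t₀) := by
    simpa using (continuous_const_add t₀).tendsto 0
  simpa [Function.comp_def] using hcentred.comp_tendsto hshift

theorem DifferentiableAt.hasDerivAt_comp_prodMk {𝕜 E : Type*} [NontriviallyNormedField 𝕜]
    [NormedAddCommGroup E] [NormedSpace 𝕜 E] {f : 𝕜 × 𝕜 → E} {a b : 𝕜 → 𝕜} {t a' b' : 𝕜}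
    (hf : DifferentiableAt 𝕜 f (a t, b t)) (ha : HasDerivAt a a' t) (hb : HasDerivAt b b' t) :
    HasDerivAt (fun s => f (a s, b s))
      (a' • deriv (fun u => f (u, b t)) (a t) + b' • deriv (fun v => f (a t, v)) (b t)) t := by
  have hpartial₁ : deriv (fun u => f (u, b t)) (a t) = fderiv 𝕜 f (a t, b t) (1, 0) :=
    (hf.hasFDerivAt.comp_hasDerivAt (a t) ((hasDerivAt_id _).prodMk (hasDerivAt_const _ _))).deriv
  have hpartial₂ : deriv (fun v => f (a t, v)) (b t) = fderiv 𝕜 f (a t, b t) (0, 1) :=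
    (hf.hasFDerivAt.comp_hasDerivAt (b t) ((hasDerivAt_const _ _).prodMk (hasDerivAt_id _))).deriv
  have hsplit : ((a', b') : 𝕜 × 𝕜) = a' • (1, 0) + b' • (0, 1) := by simp
  rw [hpartial₁, hpartial₂, ← map_smul, ← map_smul, ← map_add, ← hsplit]
  exact hf.hasFDerivAt.comp_hasDerivAt t (ha.prodMk hb)

/-- Local error of the velocity component of method (3.1): with
`v̄₁(h) = v₀ + h·f(x₀ + h·v₀, t₀ + α·h)`,
`v̄₁(h) − x'(t₀ + h) = [(1/2)·v₀·∂₁f(x₀,t₀) + (α − 1/2)·∂₂f(x₀,t₀)]·h² + o(h²)`. -/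
theorem deVogelaere_method_3_1_velocity_error
    (f : ℝ × ℝ → ℝ) (hf : ContDiff ℝ 1 f) (α t₀ : ℝ)
    (x : ℝ → ℝ) (s : Set ℝ) (hs : s ∈ nhds t₀)
    (hx : ContDiffOn ℝ 3 x s)
    (hode : ∀ t ∈ s, deriv (deriv x) t = f (x t, t)) :
    (fun h : ℝ =>
        (deriv x t₀ + h * f (x t₀ + h * deriv x t₀, t₀ + α * h)) - deriv x (t₀ + h)
          - ((1 / 2) * deriv x t₀ * deriv (fun u => f (u, t₀)) (x t₀)
              + (α - 1 / 2) * deriv (fun t => f (x t₀, t)) t₀) * h ^ 2)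
      =o[nhds 0] fun h : ℝ => h ^ 2 := by
  have hfd : ∀ p, DifferentiableAt ℝ f p := hf.differentiable one_ne_zero
  have hx' : HasDerivAt x (deriv x t₀) t₀ :=
    ((hx.contDiffAt hs).differentiableAt (by norm_num)).hasDerivAt
  have hode_near : ∀ᶠ t in 𝓝 t₀, HasDerivAt (deriv x) (f (x t, t)) t := by
    filter_upwards [hs, eventually_mem_nhds_iff.mpr hs] with t hts hst
    rw [← hode t hts]
    exact (((hx.contDiffAt hst).derivWithin (m := 1) (by norm_num)).differentiableAt
      one_ne_zero).hasDerivAt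
  have hvelocity := ((hfd _).hasDerivAt_comp_prodMk hx' (hasDerivAt_id t₀)
    ).isLittleO_taylor_two_nhds_zero hode_near
  have hpredictor := hasDerivAt_iff_isLittleO_nhds_zero.mp ((hfd _).hasDerivAt_comp_prodMk
    (((hasDerivAt_id (0 : ℝ)).mul_const (deriv x t₀)).const_add (x t₀))
    (((hasDerivAt_id (0 : ℝ)).const_mul α).const_add t₀))
  have hstep := ((isBigO_refl (fun h : ℝ => h) (𝓝 0)).mul_isLittleO hpredictor).congr_right
    fun h => (sq h).symm
  refine (hstep.sub hvelocity).congr (fun h => ?_) (fun _ => rfl)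
  simp only [zero_add, id_eq, zero_mul, add_zero, mul_zero, one_mul, smul_eq_mul, mul_one, one_div]
  ring
end

section
/- Let f : ℝ × ℝ → ℝ be continuously differentiable, α ∈ ℝ, and let x : ℝ → ℝ be three times continuously differentiable on a neighborhood of t₀ with x''(t) = f(x(t), t) there. Write x₀ = x(t₀), v₀ = x'(t₀), and for each h set v̄₁(h) = v₀ + h·f(x₀, t₀ + α·h) and x̄₁(h) = x₀ + h·v̄₁(h). Then, as h → 0, x̄₁(h) − x(t₀ + h) = (1/2)·h²·f(x₀, t₀) + o(h²) and v̄₁(h) − x'(t₀ + h) = [ −(1/2)·v₀·∂₁f(x₀, t₀) + (α − 1/2)·∂₂f(x₀, t₀) ]·h² + o(h²), where ∂₁f and ∂₂f denote the partial derivatives of f with respect to its first and second argument. -/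
open Asymptotics Filter

/-!
Both local errors are compared with the second-order Taylor expansions (Peano remainder) of `x`
and `x'` at `t₀`. The equation gives `x''(t₀) = f(x₀, t₀)`, and differentiating `x'' = f(x, t)`
along the solution gives `x'''(t₀) = v₀·∂₁f(x₀, t₀) + ∂₂f(x₀, t₀)`. What remains is
`f(x₀, t₀ + αh) = f(x₀, t₀) + αh·∂₂f(x₀, t₀) + o(h)`, multiplied by `h²` resp. `h`.
-/

open Topology Metric

theorem isLittleO_sub_taylor_two {E : Type*} [NormedAddCommGroup E] [NormedSpace ℝ E]
    {F : ℝ → E} {a : ℝ} {F'' : E} (hF : ∀ᶠ y in 𝓝 a, DifferentiableAt ℝ F y)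
    (hF'' : HasDerivAt (deriv F) F'' a) :
    (fun h : ℝ => F (a + h) - F a - h • deriv F a - (h ^ 2 / 2) • F'') =o[𝓝 0]
      fun h => h ^ 2 := by
  obtain ⟨r, hr, hball⟩ := eventually_nhds_iff_ball.mp hF
  have hnhds : 𝓝[ball a r] a = 𝓝 a := isOpen_ball.nhdsWithin_eq (mem_ball_self hr)
  have hderiv : ∀ y ∈ ball a r, HasDerivWithinAt
      (fun y => F y - (y - a) • deriv F a - ((y - a) ^ 2 / 2) • F'')
      (deriv F y - deriv F a - (y - a) • F'') (ball a r) y := by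
    intro y hy
    have hsq : HasDerivAt (fun y : ℝ => (y - a) ^ 2 / 2) (y - a) y := by
      simpa using (((hasDerivAt_id y).sub_const a).pow 2).div_const 2
    have hlin : HasDerivAt (fun y : ℝ => (y - a) • deriv F a) (deriv F a) y := by
      simpa using ((hasDerivAt_id y).sub_const a).smul_const (deriv F a)
    exact (((hball y hy).hasDerivAt.fun_sub hlin).fun_sub (hsq.smul_const F'')).hasDerivWithinAt
  have hsmall : (fun y => deriv F y - deriv F a - (y - a) • F'') =o[𝓝[ball a r] a]
      fun y => (y - a) ^ 1 := by
    simpa [hnhds] using hasDerivAt_iff_isLittleO.mp hF''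
  have hshift : Tendsto (fun h : ℝ => a + h) (𝓝 0) (𝓝 a) := by
    simpa using (continuous_const_add a).tendsto 0
  have := (convex_ball a r).isLittleO_pow_succ_real (mem_ball_self hr) hderiv hsmall
  rw [hnhds] at this
  refine (this.comp_tendsto hshift).congr (fun h => ?_) (fun h => by simp)
  simp only [Function.comp_apply, add_sub_cancel_left, sub_self, zero_pow two_ne_zero,
    zero_div, zero_smul, sub_zero]
  abel

theorem Asymptotics.IsLittleO.pow_mul {𝕜 : Type*} [NormedField 𝕜] {l : Filter 𝕜} {u : 𝕜 → 𝕜}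
    {n : ℕ} (hu : u =o[l] fun h => h ^ n) (k : ℕ) :
    (fun h => h ^ k * u h) =o[l] fun h => h ^ (k + n) := by
  simpa only [pow_add] using (isBigO_refl (fun h => h ^ k) l).mul_isLittleO hu

theorem HasDerivAt.comp_const_add_mul {𝕜 E : Type*} [NontriviallyNormedField 𝕜]
    [NormedAddCommGroup E] [NormedSpace 𝕜 E] {g : 𝕜 → E} {g' : E} {a : 𝕜} (c : 𝕜)
    (hg : HasDerivAt g g' a) :
    HasDerivAt (fun h => g (a + c * h)) (c • g') 0 := by
  have hline : HasDerivAt (fun h => a + c * h) c 0 := by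
    simpa using ((hasDerivAt_id (0 : 𝕜)).const_mul c).const_add a
  exact (hg.scomp_of_eq 0 hline (by simp))

theorem DifferentiableAt.hasDerivAt_comp_graph {𝕜 E : Type*} [NontriviallyNormedField 𝕜]
    [NormedAddCommGroup E] [NormedSpace 𝕜 E] {f : 𝕜 × 𝕜 → E} {x : 𝕜 → 𝕜} {t : 𝕜}
    (hf : DifferentiableAt 𝕜 f (x t, t)) (hx : DifferentiableAt 𝕜 x t) :
    HasDerivAt (fun s => f (x s, s))
      (deriv x t • deriv (fun u => f (u, t)) (x t) + deriv (fun s => f (x t, s)) t) t := by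
  have hL := hf.hasFDerivAt
  have h₁ : deriv (fun u => f (u, t)) (x t) = fderiv 𝕜 f (x t, t) (1, 0) :=
    (hL.comp_hasDerivAt (x t) ((hasDerivAt_id _).prodMk (hasDerivAt_const _ t))).deriv
  have h₂ : deriv (fun s => f (x t, s)) t = fderiv 𝕜 f (x t, t) (0, 1) :=
    (hL.comp_hasDerivAt t ((hasDerivAt_const _ (x t)).prodMk (hasDerivAt_id t))).deriv
  have hsplit : ((deriv x t, 1) : 𝕜 × 𝕜) = deriv x t • ((1, 0) : 𝕜 × 𝕜) + (0, 1) := by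
    simp
  rw [h₁, h₂, ← map_smul, ← map_add, ← hsplit]
  exact hL.comp_hasDerivAt (f := fun s => (x s, s)) t (hx.hasDerivAt.prodMk (hasDerivAt_id t))

/-- Local errors of method (3.3): with `v̄₁(h) = v₀ + h·f(x₀, t₀ + α·h)` and
`x̄₁(h) = x₀ + h·v̄₁(h)`, one has
`x̄₁(h) − x(t₀ + h) = (1/2)·h²·f(x₀, t₀) + o(h²)` and
`v̄₁(h) − x'(t₀ + h) = [−(1/2)·v₀·∂₁f(x₀,t₀) + (α − 1/2)·∂₂f(x₀,t₀)]·h² + o(h²)`. -/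
theorem deVogelaere_method_3_3_local_errors
    (f : ℝ × ℝ → ℝ) (hf : ContDiff ℝ 1 f) (α t₀ : ℝ)
    (x : ℝ → ℝ) (s : Set ℝ) (hs : s ∈ nhds t₀)
    (hx : ContDiffOn ℝ 3 x s)
    (hode : ∀ t ∈ s, deriv (deriv x) t = f (x t, t)) :
    ((fun h : ℝ =>
        (x t₀ + h * (deriv x t₀ + h * f (x t₀, t₀ + α * h))) - x (t₀ + h)
          - (1 / 2) * h ^ 2 * f (x t₀, t₀))
      =o[nhds 0] fun h : ℝ => h ^ 2) ∧
    ((fun h : ℝ =>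
        (deriv x t₀ + h * f (x t₀, t₀ + α * h)) - deriv x (t₀ + h)
          - (-(1 / 2) * deriv x t₀ * deriv (fun u => f (u, t₀)) (x t₀)
              + (α - 1 / 2) * deriv (fun t => f (x t₀, t)) t₀) * h ^ 2)
      =o[nhds 0] fun h : ℝ => h ^ 2) := by
  have hx₃ : ∀ᶠ t in 𝓝 t₀, ContDiffAt ℝ 3 x t := (hx.contDiffAt hs).eventually (by simp)
  have hdx : ∀ᶠ t in 𝓝 t₀, DifferentiableAt ℝ x t :=
    hx₃.mono fun t ht => ht.differentiableAt (by norm_num)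
  have hddx : ∀ᶠ t in 𝓝 t₀, DifferentiableAt ℝ (deriv x) t :=
    hx₃.mono fun t ht => (ht.derivWithin (m := 1) (by norm_num)).differentiableAt one_ne_zero
  have hfd : Differentiable ℝ f := hf.differentiable one_ne_zero
  have hx'' : HasDerivAt (deriv x) (f (x t₀, t₀)) t₀ :=
    hode t₀ (mem_of_mem_nhds hs) ▸ hddx.self_of_nhds.hasDerivAt
  have hx''' := (hfd _).hasDerivAt_comp_graph hdx.self_of_nhds |>.congr_of_eventuallyEq
    (mem_of_superset hs hode)
  have hstep : HasDerivAt (fun h => f (x t₀, t₀ + α * h))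
      (α * deriv (fun t => f (x t₀, t)) t₀) 0 := by
    have hpartial : DifferentiableAt ℝ (fun t => f (x t₀, t)) t₀ := by fun_prop
    simpa using hpartial.hasDerivAt.comp_const_add_mul α
  have hx_taylor := isLittleO_sub_taylor_two hdx hx''
  have hv_taylor := isLittleO_sub_taylor_two hddx hx'''
  rw [hx''.deriv] at hv_taylor
  have hcont : (fun h => f (x t₀, t₀ + α * h) - f (x t₀, t₀)) =o[𝓝 0] fun h : ℝ => h ^ 0 := by
    simpa [isLittleO_one_iff] using hstep.continuousAt.tendsto.sub_const (f (x t₀, t₀))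
  have hlin : (fun h => f (x t₀, t₀ + α * h) - f (x t₀, t₀)
      - h * (α * deriv (fun t => f (x t₀, t)) t₀)) =o[𝓝 0] fun h : ℝ => h ^ 1 := by
    simpa using hasDerivAt_iff_isLittleO.mp hstep
  simp only [smul_eq_mul] at hx_taylor hv_taylor
  constructor
  · have := hx_taylor.neg_left.add (hcont.pow_mul 2)
    exact this.congr (fun h => by ring) (fun h => by ring)
  · have := hv_taylor.neg_left.add (hlin.pow_mul 1)
    exact this.congr (fun h => by ring) (fun h => by ring)
end

section
/- Let f : ℝ × ℝ → ℝ be twice continuously differentiable, α ∈ ℝ, and let x : ℝ → ℝ be four times continuously differentiable on a neighborhood of t₀ with x''(t) = f(x(t), t) there. Write x₀ = x(t₀), v₀ = x'(t₀), and for each h set x̄₂(h) = x₀ + h·v₀ + (h²/2)·f(x₀, t₀ + α·h). Then, as h → 0, x̄₂(h) − x(t₀ + h) = [ −(1/6)·v₀·∂₁f(x₀, t₀) + (α/2 − 1/6)·∂₂f(x₀, t₀) ]·h³ + o(h³), where ∂₁f and ∂₂f denote the partial derivatives of f with respect to its first and second argument. -/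
/-!
Expand the solution to third order at `t₀`. The equation gives `x''(t₀) = f(x₀, t₀)`, and
differentiating it along the solution gives `x'''(t₀) = v₀·∂₁f + ∂₂f`. Since
`f(x₀, t₀ + αh) = f(x₀, t₀) + αh·∂₂f + o(h)`, the terms of order at most two cancel in
`x̄₂(h) − x(t₀ + h)`, and the cubic terms are `(α/2)·∂₂f·h³ − (v₀·∂₁f + ∂₂f)·h³/6`.
-/

open Asymptotics Filter

section Taylor

variable {E : Type*} [NormedAddCommGroup E] [NormedSpace ℝ E]

theorem ContDiffOn.isLittleO_taylor_three {g : ℝ → E} {s : Set ℝ} {t₀ : ℝ} (hs : s ∈ nhds t₀)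
    (hg : ContDiffOn ℝ 3 g s) :
    (fun h : ℝ => g (t₀ + h) - (g t₀ + h • deriv g t₀ + (h ^ 2 / 2) • deriv (deriv g) t₀
        + (h ^ 3 / 6) • deriv (deriv (deriv g)) t₀)) =o[nhds 0] fun h : ℝ => h ^ 3 := by
  obtain ⟨ε, hε, hball⟩ := Metric.mem_nhds_iff.1 hs
  have htaylor := taylor_isLittleO (convex_ball t₀ ε) (Metric.mem_ball_self hε) (hg.mono hball)
  rw [nhdsWithin_eq_nhds.2 (Metric.ball_mem_nhds t₀ hε)] at htaylor
  have hshift : Tendsto (fun h : ℝ => t₀ + h) (nhds 0) (nhds t₀) := by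
    simpa using (continuous_const_add t₀).tendsto 0
  have hderiv (k : ℕ) : iteratedDerivWithin k g (Metric.ball t₀ ε) t₀ = deriv^[k] g t₀ :=
    iteratedDerivWithin_of_isOpen_eq_iterate Metric.isOpen_ball (Metric.mem_ball_self hε)
  refine (htaylor.comp_tendsto hshift).congr (fun h => ?_) (fun h => by simp)
  norm_num [taylor_within_apply, Finset.sum_range_succ, hderiv, Nat.factorial, div_eq_inv_mul]

end Taylor

section Partials

variable {E : Type*} [NormedAddCommGroup E] [NormedSpace ℝ E] {f : ℝ × ℝ → E} {a b : ℝ}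

theorem DifferentiableAt.fderiv_apply_eq_partials (hf : DifferentiableAt ℝ f (a, b)) (v w : ℝ) :
    fderiv ℝ f (a, b) (v, w)
      = v • deriv (fun y => f (y, b)) a + w • deriv (fun y => f (a, y)) b := by
  have h₁ : HasDerivAt (fun y => f (y, b)) (fderiv ℝ f (a, b) (1, 0)) a :=
    hf.hasFDerivAt.comp_hasDerivAt a ((hasDerivAt_id a).prodMk (hasDerivAt_const a b))
  have h₂ : HasDerivAt (fun y => f (a, y)) (fderiv ℝ f (a, b) (0, 1)) b :=
    hf.hasFDerivAt.comp_hasDerivAt b ((hasDerivAt_const b a).prodMk (hasDerivAt_id b))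
  have hvw : ((v, w) : ℝ × ℝ) = v • (1, 0) + w • (0, 1) := by simp
  rw [h₁.deriv, h₂.deriv, hvw, map_add, map_smul, map_smul]

theorem DifferentiableAt.hasDerivAt_comp_prodMk_s6 {u v : ℝ → ℝ} {u' v' t : ℝ}
    (hf : DifferentiableAt ℝ f (a, b)) (hu : HasDerivAt u u' t) (hv : HasDerivAt v v' t)
    (hut : u t = a) (hvt : v t = b) :
    HasDerivAt (fun s => f (u s, v s))
      (u' • deriv (fun y => f (y, b)) a + v' • deriv (fun y => f (a, y)) b) t := by
  rw [← hf.fderiv_apply_eq_partials]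
  exact hf.hasFDerivAt.comp_hasDerivAt_of_eq t (hu.prodMk hv) (by rw [hut, hvt])

end Partials

/-- Local position error of method (4.1): with
`x̄₂(h) = x₀ + h·v₀ + (h²/2)·f(x₀, t₀ + α·h)`,
`x̄₂(h) − x(t₀ + h) = [−(1/6)·v₀·∂₁f + (α/2 − 1/6)·∂₂f]·h³ + o(h³)`,
the partial derivatives being evaluated at `(x₀, t₀)`. -/
theorem deVogelaere_method_4_1_position_error
    (f : ℝ × ℝ → ℝ) (hf : ContDiff ℝ 2 f) (α t₀ : ℝ)
    (x : ℝ → ℝ) (s : Set ℝ) (hs : s ∈ nhds t₀)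
    (hx : ContDiffOn ℝ 4 x s)
    (hode : ∀ t ∈ s, deriv (deriv x) t = f (x t, t)) :
    (fun h : ℝ =>
        (x t₀ + h * deriv x t₀ + h ^ 2 / 2 * f (x t₀, t₀ + α * h)) - x (t₀ + h)
          - (-(1 / 6) * deriv x t₀ * deriv (fun u => f (u, t₀)) (x t₀)
              + (α / 2 - 1 / 6) * deriv (fun t => f (x t₀, t)) t₀) * h ^ 3)
      =o[nhds 0] fun h : ℝ => h ^ 3 := by
  set D₁ := deriv (fun u => f (u, t₀)) (x t₀)
  set D₂ := deriv (fun t => f (x t₀, t)) t₀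
  have hfd : DifferentiableAt ℝ f (x t₀, t₀) := hf.differentiable (by norm_num) _
  have hx₂ : deriv (deriv x) t₀ = f (x t₀, t₀) := hode t₀ (mem_of_mem_nhds hs)
  have hx₃ : deriv (deriv (deriv x)) t₀ = deriv x t₀ * D₁ + D₂ := by
    have hcurve : HasDerivAt (fun t => f (x t, t)) (deriv x t₀ • D₁ + (1 : ℝ) • D₂) t₀ :=
      hfd.hasDerivAt_comp_prodMk_s6 ((hx.contDiffAt hs).differentiableAt (by norm_num)).hasDerivAt
        (hasDerivAt_id' t₀) rfl rfl
    rw [EventuallyEq.deriv_eq (eventually_of_mem hs hode), hcurve.deriv, smul_eq_mul, one_smul]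
  have hslice : HasDerivAt (fun h : ℝ => f (x t₀, t₀ + α * h)) (α * D₂) 0 := by
    simpa using hfd.hasDerivAt_comp_prodMk_s6 (hasDerivAt_const 0 (x t₀))
      (((hasDerivAt_id 0).const_mul α).const_add t₀) rfl (by simp)
  have hslice_o := hasDerivAt_iff_isLittleO_nhds_zero.1 hslice
  have hquad : (fun h : ℝ => h ^ 2 / 2) =O[nhds 0] fun h : ℝ => h ^ 2 :=
    (isBigO_refl _ _).const_mul_left (1 / 2) |>.congr_left fun h => by ring
  have htaylor := (hx.of_le (by norm_num)).isLittleO_taylor_three hs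
  refine ((hquad.mul_isLittleO hslice_o).sub htaylor).congr (fun h => ?_) (fun h => by ring)
  simp only [smul_eq_mul, hx₂, hx₃, zero_add, mul_zero, add_zero]
  ring
end

section
/- Let f : ℝ × ℝ → ℝ be twice continuously differentiable and let x : ℝ → ℝ be four times continuously differentiable on a neighborhood of t₀ with x''(t) = f(x(t), t) there. Write x₀ = x(t₀), v₀ = x'(t₀), and for each h set x̄₁(h) = x₀ + (h/2)·v₀, v̄₂(h) = v₀ + h·f(x̄₁(h), t₀ + h/2), x̄₂(h) = x̄₁(h) + (h/2)·v̄₂(h). Then, as h → 0, x̄₂(h) − x(t₀ + h) = [ ∂₁f·v₀ + ∂₂f ]·(h³/12) + o(h³) and v̄₂(h) − x'(t₀ + h) = −[ (1/2)·∂₁₁f·v₀² + ∂₁₂f·v₀ + (1/2)·∂₂₂f + 2·∂₁f·f ]·(h³/12) + o(h³), where all derivatives of f are evaluated at (x₀, t₀) and ∂₁, ∂₂ denote partial derivatives with respect to the first and second argument of f. -/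
/-!
Both local errors are read off from third-order Taylor expansions. Along the solution,
`x'' = f (x, t)` gives `x''' = Df (x', 1)` and `x'''' = D²f [(x', 1), (x', 1)] + Df (f, 0)`.
The predictor samples `f` on the tangent line `h ↦ (x₀, t₀) + (h / 2) • (v₀, 1)`, so
`f (x̄₁ h, t₀ + h/2) = f₀ + (h/2) Df (v₀, 1) + (h²/8) D²f [(v₀, 1), (v₀, 1)] + o(h²)`.
Substituting into `x̄₂ = x₀ + h v₀ + (h²/2) f (x̄₁ h, …)` and `v̄₂ = v₀ + h f (x̄₁ h, …)`, all terms
up to order `h²` cancel, and expanding `Df`, `D²f` in the partial derivatives (the mixed ones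
agree by Schwarz's theorem) gives the stated `h³` coefficients.
-/

open Asymptotics Filter Topology
open scoped Nat

section Taylor

variable {E : Type*} [NormedAddCommGroup E] [NormedSpace ℝ E]

theorem ContDiffAt.isLittleO_sub_taylor {f : ℝ → E} {x₀ : ℝ} {n : ℕ}
    (hf : ContDiffAt ℝ n f x₀) :
    (fun h ↦ f (x₀ + h) -
        ∑ k ∈ Finset.range (n + 1), ((k ! : ℝ)⁻¹ * h ^ k) • iteratedDeriv k f x₀)
      =o[𝓝 0] fun h ↦ h ^ n := by
  obtain ⟨u, hu, hfu⟩ := hf.contDiffOn le_rfl (by simp)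
  obtain ⟨ε, hε, hball⟩ := Metric.mem_nhds_iff.1 hu
  have hx₀ := Metric.mem_ball_self (x := x₀) hε
  have hT := taylor_isLittleO (convex_ball x₀ ε) hx₀ (hfu.mono hball)
  rw [Metric.isOpen_ball.nhdsWithin_eq hx₀] at hT
  have hshift : Tendsto (fun h : ℝ ↦ x₀ + h) (𝓝 0) (𝓝 x₀) := by
    simpa using (continuous_const_add x₀).tendsto 0
  simpa [Function.comp_def, taylor_within_apply,
    iteratedDerivWithin_of_isOpen Metric.isOpen_ball hx₀] using hT.comp_tendsto hshift

end Taylor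

section Curve

variable {E F : Type*} [NormedAddCommGroup E] [NormedSpace ℝ E]
  [NormedAddCommGroup F] [NormedSpace ℝ F]

theorem hasDerivAt_deriv_comp {f : E → F} {c c' : ℝ → E} {c'' : E} {t : ℝ}
    (hf : Differentiable ℝ f) (hf' : DifferentiableAt ℝ (fderiv ℝ f) (c t))
    (hc : ∀ᶠ s in 𝓝 t, HasDerivAt c (c' s) s) (hc' : HasDerivAt c' c'' t) :
    HasDerivAt (deriv fun s ↦ f (c s))
      (fderiv ℝ (fderiv ℝ f) (c t) (c' t) (c' t) + fderiv ℝ f (c t) c'') t := by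
  have hderiv : deriv (fun s ↦ f (c s)) =ᶠ[𝓝 t] fun s ↦ fderiv ℝ f (c s) (c' s) :=
    hc.mono fun s hs ↦ ((hf (c s)).hasFDerivAt.comp_hasDerivAt s hs).deriv
  exact ((hf'.hasFDerivAt.comp_hasDerivAt t hc.self_of_nhds).clm_apply hc').congr_of_eventuallyEq
    hderiv

theorem ContDiff.isLittleO_comp_add_smul_sub_taylor {f : E → F} (hf : ContDiff ℝ 2 f) (p v : E) :
    ((fun h : ℝ ↦ f (p + h • v) - (f p + h • fderiv ℝ f p v)) =o[𝓝 0] fun h ↦ h) ∧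
    ((fun h : ℝ ↦ f (p + h • v) -
        (f p + h • fderiv ℝ f p v + (h ^ 2 / 2) • fderiv ℝ (fderiv ℝ f) p v v))
      =o[𝓝 0] fun h ↦ h ^ 2) := by
  have hline (s : ℝ) : HasDerivAt (fun h : ℝ ↦ p + h • v) v s := by
    simpa using ((hasDerivAt_id s).smul_const v).const_add p
  have hf₁ : Differentiable ℝ f := hf.differentiable two_ne_zero
  have hg : ContDiff ℝ 2 fun h : ℝ ↦ f (p + h • v) :=
    hf.comp (contDiff_const.add (contDiff_id.smul contDiff_const))
  have hg₁ : deriv (fun h : ℝ ↦ f (p + h • v)) 0 = fderiv ℝ f p v :=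
    ((hf₁ p).hasFDerivAt.comp_hasDerivAt_of_eq 0 (hline 0) (by simp)).deriv
  have hg₂ : deriv (deriv fun h : ℝ ↦ f (p + h • v)) 0 = fderiv ℝ (fderiv ℝ f) p v v := by
    simpa using (hasDerivAt_deriv_comp (c' := fun _ ↦ v) (c'' := 0) hf₁
      ((hf.fderiv_right le_rfl).differentiable one_ne_zero _) (.of_forall hline)
      (hasDerivAt_const 0 v)).deriv
  constructor
  · simpa [Finset.sum_range_succ, hg₁] using
      ((hg.of_le one_le_two).contDiffAt (x := 0)).isLittleO_sub_taylor (n := 1)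
  · simpa [Finset.sum_range_succ, iteratedDeriv_succ, hg₁, hg₂, div_eq_inv_mul, add_assoc] using
      (hg.contDiffAt (x := 0)).isLittleO_sub_taylor (n := 2)

end Curve

section PartialDerivatives

variable {F : Type*} [NormedAddCommGroup F] [NormedSpace ℝ F] {f : ℝ × ℝ → F} {u t : ℝ}

theorem deriv_partial_fst (hf : DifferentiableAt ℝ f (u, t)) :
    deriv (fun u ↦ f (u, t)) u = fderiv ℝ f (u, t) (1, 0) :=
  (hf.hasFDerivAt.comp_hasDerivAt u ((hasDerivAt_id u).prodMk (hasDerivAt_const u t))).deriv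

theorem deriv_partial_snd (hf : DifferentiableAt ℝ f (u, t)) :
    deriv (fun t ↦ f (u, t)) t = fderiv ℝ f (u, t) (0, 1) :=
  (hf.hasFDerivAt.comp_hasDerivAt t ((hasDerivAt_const t u).prodMk (hasDerivAt_id t))).deriv

theorem deriv_partial_fst_fst (hf : Differentiable ℝ f)
    (hf' : DifferentiableAt ℝ (fderiv ℝ f) (u, t)) :
    deriv (fun u ↦ deriv (fun u' ↦ f (u', t)) u) u =
      fderiv ℝ (fderiv ℝ f) (u, t) (1, 0) (1, 0) := by
  simpa using (hasDerivAt_deriv_comp (c := fun u ↦ (u, t)) (c' := fun _ ↦ (1, 0)) (c'' := 0)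
    hf hf'
    (.of_forall fun u ↦ (hasDerivAt_id u).prodMk (hasDerivAt_const u t))
    (hasDerivAt_const u _)).deriv

theorem deriv_partial_snd_snd (hf : Differentiable ℝ f)
    (hf' : DifferentiableAt ℝ (fderiv ℝ f) (u, t)) :
    deriv (fun t ↦ deriv (fun t' ↦ f (u, t')) t) t =
      fderiv ℝ (fderiv ℝ f) (u, t) (0, 1) (0, 1) := by
  simpa using (hasDerivAt_deriv_comp (c := fun t ↦ (u, t)) (c' := fun _ ↦ (0, 1)) (c'' := 0)
    hf hf'
    (.of_forall fun t ↦ (hasDerivAt_const t u).prodMk (hasDerivAt_id t))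
    (hasDerivAt_const t _)).deriv

theorem deriv_partial_snd_fst (hf : Differentiable ℝ f)
    (hf' : DifferentiableAt ℝ (fderiv ℝ f) (u, t)) :
    deriv (fun t ↦ deriv (fun u' ↦ f (u', t)) u) t =
      fderiv ℝ (fderiv ℝ f) (u, t) (0, 1) (1, 0) := by
  simp_rw [deriv_partial_fst (hf _)]
  simpa using ((hf'.hasFDerivAt.comp_hasDerivAt t
    ((hasDerivAt_const t u).prodMk (hasDerivAt_id t))).clm_apply (hasDerivAt_const t _)).deriv

theorem ContinuousLinearMap.apply_prod_real (L : ℝ × ℝ →L[ℝ] F) (a b : ℝ) :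
    L (a, b) = a • L (1, 0) + b • L (0, 1) := by
  rw [← map_smul, ← map_smul, ← map_add]; simp

theorem IsSymmSndFDerivAt.fderiv_fderiv_apply_prod_real (hf : IsSymmSndFDerivAt ℝ f (u, t))
    (a b : ℝ) :
    fderiv ℝ (fderiv ℝ f) (u, t) (a, b) (a, b) = a ^ 2 • fderiv ℝ (fderiv ℝ f) (u, t) (1, 0) (1, 0)
      + (2 * a * b) • fderiv ℝ (fderiv ℝ f) (u, t) (0, 1) (1, 0)
      + b ^ 2 • fderiv ℝ (fderiv ℝ f) (u, t) (0, 1) (0, 1) := by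
  rw [ContinuousLinearMap.apply_prod_real (fderiv ℝ (fderiv ℝ f) (u, t) (a, b)),
    ContinuousLinearMap.apply_prod_real (fderiv ℝ (fderiv ℝ f) (u, t))]
  simp only [add_apply, smul_apply, hf (1, 0) (0, 1)]
  module

end PartialDerivatives

section SecondOrderODE

variable {f : ℝ × ℝ → ℝ} {x : ℝ → ℝ} {t₀ : ℝ}

theorem isLittleO_solution_sub_taylor (hf : ContDiff ℝ 2 f) (hx : ContDiffAt ℝ 4 x t₀)
    (hode : deriv (deriv x) =ᶠ[𝓝 t₀] fun t ↦ f (x t, t)) :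
    ((fun h ↦ x (t₀ + h) - (x t₀ + h * deriv x t₀ + h ^ 2 / 2 * f (x t₀, t₀)
        + h ^ 3 / 6 * fderiv ℝ f (x t₀, t₀) (deriv x t₀, 1))) =o[𝓝 0] fun h ↦ h ^ 3) ∧
    ((fun h ↦ deriv x (t₀ + h) - (deriv x t₀ + h * f (x t₀, t₀)
        + h ^ 2 / 2 * fderiv ℝ f (x t₀, t₀) (deriv x t₀, 1)
        + h ^ 3 / 6 * (fderiv ℝ (fderiv ℝ f) (x t₀, t₀) (deriv x t₀, 1) (deriv x t₀, 1)
          + fderiv ℝ f (x t₀, t₀) (f (x t₀, t₀), 0)))) =o[𝓝 0] fun h ↦ h ^ 3) := by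
  have hf₁ : Differentiable ℝ f := hf.differentiable two_ne_zero
  have hdx : ContDiffAt ℝ 3 (deriv x) t₀ := hx.derivWithin (by norm_num)
  have hcurve : ∀ᶠ t in 𝓝 t₀, HasDerivAt (fun t ↦ (x t, t)) (deriv x t, 1) t :=
    (hx.eventually (by simp)).mono fun t ht ↦
      (ht.differentiableAt (by norm_num)).hasDerivAt.prodMk (hasDerivAt_id t)
  have hx₂ : deriv (deriv x) t₀ = f (x t₀, t₀) := hode.self_of_nhds
  have hx₃ : deriv (deriv (deriv x)) t₀ = fderiv ℝ f (x t₀, t₀) (deriv x t₀, 1) :=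
    hode.deriv_eq.trans ((hf₁ _).hasFDerivAt.comp_hasDerivAt t₀ hcurve.self_of_nhds).deriv
  have hx₄ : deriv (deriv (deriv (deriv x))) t₀ =
      fderiv ℝ (fderiv ℝ f) (x t₀, t₀) (deriv x t₀, 1) (deriv x t₀, 1)
        + fderiv ℝ f (x t₀, t₀) (f (x t₀, t₀), 0) := by
    refine hode.deriv.deriv_eq.trans (hasDerivAt_deriv_comp hf₁
      ((hf.fderiv_right le_rfl).differentiable one_ne_zero _) hcurve ?_).deriv
    exact hx₂ ▸ (hdx.differentiableAt (by norm_num)).hasDerivAt.prodMk (hasDerivAt_const t₀ 1)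
  constructor
  · simpa [Finset.sum_range_succ, iteratedDeriv_succ, hx₂, hx₃, Nat.factorial, div_eq_inv_mul,
      mul_comm] using (hx.of_le (by norm_num)).isLittleO_sub_taylor (n := 3)
  · simpa [Finset.sum_range_succ, iteratedDeriv_succ, hx₂, hx₃, hx₄, Nat.factorial,
      div_eq_inv_mul, mul_comm] using hdx.isLittleO_sub_taylor (n := 3)

end SecondOrderODE

/-- Local errors of method (4.3): with `x̄₁(h) = x₀ + (h/2)·v₀`,
`v̄₂(h) = v₀ + h·f(x̄₁(h), t₀ + h/2)`, `x̄₂(h) = x̄₁(h) + (h/2)·v̄₂(h)`, one has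
`x̄₂(h) − x(t₀ + h) = [∂₁f·v₀ + ∂₂f]·(h³/12) + o(h³)` and
`v̄₂(h) − x'(t₀ + h) = −[(1/2)·∂₁₁f·v₀² + ∂₁₂f·v₀ + (1/2)·∂₂₂f + 2·∂₁f·f]·(h³/12) + o(h³)`,
all derivatives of `f` evaluated at `(x₀, t₀)`. -/
theorem deVogelaere_method_4_3_local_errors
    (f : ℝ × ℝ → ℝ) (hf : ContDiff ℝ 2 f) (t₀ : ℝ)
    (x : ℝ → ℝ) (s : Set ℝ) (hs : s ∈ nhds t₀)
    (hx : ContDiffOn ℝ 4 x s)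
    (hode : ∀ t ∈ s, deriv (deriv x) t = f (x t, t))
    (x₁ v₂ x₂ : ℝ → ℝ)
    (hx₁ : ∀ h : ℝ, x₁ h = x t₀ + h / 2 * deriv x t₀)
    (hv₂ : ∀ h : ℝ, v₂ h = deriv x t₀ + h * f (x₁ h, t₀ + h / 2))
    (hx₂ : ∀ h : ℝ, x₂ h = x₁ h + h / 2 * v₂ h) :
    ((fun h : ℝ =>
        x₂ h - x (t₀ + h)
          - (deriv (fun u => f (u, t₀)) (x t₀) * deriv x t₀
              + deriv (fun t => f (x t₀, t)) t₀) * (h ^ 3 / 12))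
      =o[nhds 0] fun h : ℝ => h ^ 3) ∧
    ((fun h : ℝ =>
        v₂ h - deriv x (t₀ + h)
          + ((1 / 2) * deriv (fun u => deriv (fun u' => f (u', t₀)) u) (x t₀)
                * (deriv x t₀) ^ 2
              + deriv (fun t => deriv (fun u => f (u, t)) (x t₀)) t₀ * deriv x t₀
              + (1 / 2) * deriv (fun t => deriv (fun t' => f (x t₀, t')) t) t₀
              + 2 * deriv (fun u => f (u, t₀)) (x t₀) * f (x t₀, t₀)) * (h ^ 3 / 12))
      =o[nhds 0] fun h : ℝ => h ^ 3) := by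
  have hf₁ : Differentiable ℝ f := hf.differentiable two_ne_zero
  have hf₂ : DifferentiableAt ℝ (fderiv ℝ f) (x t₀, t₀) :=
    (hf.fderiv_right le_rfl).differentiable one_ne_zero _
  have hsymm : IsSymmSndFDerivAt ℝ f (x t₀, t₀) := hf.contDiffAt.isSymmSndFDerivAt (by simp)
  obtain ⟨hX, hV⟩ := isLittleO_solution_sub_taylor hf (hx.contDiffAt hs) (eventually_of_mem hs hode)
  obtain ⟨hG₁, hG₂⟩ := hf.isLittleO_comp_add_smul_sub_taylor (x t₀, t₀) (deriv x t₀ / 2, 1 / 2)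
  have hpredictor (h : ℝ) :
      (x t₀, t₀) + h • (deriv x t₀ / 2, (1 : ℝ) / 2) = (x₁ h, t₀ + h / 2) := by
    simp only [hx₁, Prod.smul_mk, Prod.mk_add_mk, smul_eq_mul, Prod.mk.injEq]
    constructor <;> ring
  rw [ContinuousLinearMap.apply_prod_real _ (deriv x t₀)] at hX hV
  rw [ContinuousLinearMap.apply_prod_real _ (f (x t₀, t₀)),
    hsymm.fderiv_fderiv_apply_prod_real] at hV
  rw [ContinuousLinearMap.apply_prod_real _ (deriv x t₀ / 2)] at hG₁ hG₂
  rw [hsymm.fderiv_fderiv_apply_prod_real] at hG₂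
  simp only [hpredictor, smul_eq_mul] at hX hV hG₁ hG₂
  rw [deriv_partial_fst (hf₁ _), deriv_partial_snd (hf₁ _), deriv_partial_fst_fst hf₁ hf₂,
    deriv_partial_snd_fst hf₁ hf₂, deriv_partial_snd_snd hf₁ hf₂]
  constructor
  · have hE := (((isBigO_refl (fun h : ℝ ↦ h ^ 2) _).mul_isLittleO hG₁).const_mul_left
      (1 / 2)).sub hX
    refine hE.congr_left fun h ↦ ?_
    rw [hx₂, hv₂, hx₁]
    ring
  · have hE := (hG₂.mul_isBigO (isBigO_refl (fun h : ℝ ↦ h) _)).sub hV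
    refine hE.congr_left fun h ↦ ?_
    rw [hv₂]
    ring
end

section
/- Let H : ℝ × ℝ × ℝ → ℝ (arguments (x, y, t)) be such that H(·,·,τ) is twice continuously differentiable for the fixed time τ, and let h ∈ ℝ. Suppose φ = (X, Y) : ℝ × ℝ → ℝ × ℝ is differentiable and satisfies, for all (x₀, y₀), the implicit equations X(x₀, y₀) = x₀ + h·∂H/∂y(X(x₀, y₀), y₀, τ) and Y(x₀, y₀) = y₀ − h·∂H/∂x(X(x₀, y₀), y₀, τ). Then the determinant of the Fréchet derivative of φ equals 1 at every point; i.e., the implicit first-order method (5.1) applied to a Hamiltonian system preserves area. -/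
/-!
Write `G = H(·,·,τ)`, `a = ∂X/∂x₀`, `b = ∂X/∂y₀`. Differentiating the implicit equations expresses
the Jacobian of `φ` through `a`, `b` and the Hessian of `G` at `(X, y₀)`; in particular
`a = 1 + h G_yx a`. Expanding `det Dφ`, the `G_xx` terms cancel and what remains is
`a (1 - h G_xy)`, which equals `1` because the Hessian is symmetric.
-/

open ContinuousLinearMap

variable {𝕜 : Type*} [NontriviallyNormedField 𝕜]

theorem LinearMap.det_prod_eq_mul_sub_mul {R : Type*} [CommRing R] (f g : R × R →ₗ[R] R) :
    LinearMap.det (f.prod g) = f (1, 0) * g (0, 1) - f (0, 1) * g (1, 0) := by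
  rw [← LinearMap.det_toMatrix (Module.Basis.finTwoProd R), Matrix.det_fin_two]
  simp [LinearMap.toMatrix_apply]

theorem ContinuousLinearMap.det_prod_eq_mul_sub_mul (f g : 𝕜 × 𝕜 →L[𝕜] 𝕜) :
    (f.prod g).det = f (1, 0) * g (0, 1) - f (0, 1) * g (1, 0) :=
  LinearMap.det_prod_eq_mul_sub_mul (f : 𝕜 × 𝕜 →ₗ[𝕜] 𝕜) g

theorem ContinuousLinearMap.map_pair_eq {M : Type*} [AddCommMonoid M] [Module 𝕜 M]
    [TopologicalSpace M] (B : 𝕜 × 𝕜 →L[𝕜] M) (a b : 𝕜) :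
    B (a, b) = a • B (1, 0) + b • B (0, 1) := by
  rw [← map_smul, ← map_smul, ← map_add]
  simp

/-- The linearization of method (5.1): `B` plays the Hessian of `H(·,·,τ)` at `(X, y₀)`,
`f` and `g` the derivatives of `X` and `Y`. -/
theorem det_prod_eq_one_of_symplectic_euler (B : 𝕜 × 𝕜 →L[𝕜] 𝕜 × 𝕜 →L[𝕜] 𝕜)
    (hB : ∀ v w, B v w = B w v) (h : 𝕜) (f g : 𝕜 × 𝕜 →L[𝕜] 𝕜)
    (hf : ∀ u, f u = u.1 + h * B (f u, u.2) (0, 1))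
    (hg : ∀ u, g u = u.2 - h * B (f u, u.2) (1, 0)) :
    (f.prod g).det = 1 := by
  set s := B (1, 0) (1, 0)
  set t := B (0, 1) (1, 0)
  set r := B (0, 1) (0, 1)
  have hf' : ∀ u, f u = u.1 + h * (f u * t + u.2 * r) := fun u =>
    (hf u).trans <| by rw [hB, map_pair_eq (B (0, 1)) (f u) u.2, smul_eq_mul, smul_eq_mul]
  have hg' : ∀ u, g u = u.2 - h * (f u * s + u.2 * t) := fun u =>
    (hg u).trans <| by
      rw [hB, map_pair_eq (B (1, 0)) (f u) u.2, smul_eq_mul, smul_eq_mul, hB (1, 0) (0, 1)]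
  have ha := hf' (1, 0)
  rw [det_prod_eq_mul_sub_mul, hg' (1, 0), hg' (0, 1), hf' (0, 1)]
  dsimp only
  linear_combination ha

section Calculus

variable {E F : Type*} [NormedAddCommGroup E] [NormedSpace 𝕜 E]
  [NormedAddCommGroup F] [NormedSpace 𝕜 F]

theorem deriv_comp_prodMk_left {G : 𝕜 × E → F} {x : 𝕜} {y : E}
    (hG : DifferentiableAt 𝕜 G (x, y)) :
    deriv (fun x => G (x, y)) x = fderiv 𝕜 G (x, y) (1, 0) :=
  (hG.hasFDerivAt.comp_hasDerivAt x ((hasDerivAt_id x).prodMk (hasDerivAt_const x y))).deriv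

theorem deriv_comp_prodMk_right {G : E × 𝕜 → F} {x : E} {y : 𝕜}
    (hG : DifferentiableAt 𝕜 G (x, y)) :
    deriv (fun y => G (x, y)) y = fderiv 𝕜 G (x, y) (0, 1) :=
  (hG.hasFDerivAt.comp_hasDerivAt y ((hasDerivAt_const y x).prodMk (hasDerivAt_id y))).deriv

theorem fderiv_apply_of_forall_eq_add_mul_fderiv_apply {G : E → 𝕜} {Φ : F → E}
    {Φ' : F →L[𝕜] E} {f : F → 𝕜} {ℓ : F →L[𝕜] 𝕜} {c : 𝕜} {w : E} {p : F}
    (hf : ∀ q, f q = ℓ q + c * fderiv 𝕜 G (Φ q) w) (hG : ContDiffAt 𝕜 2 G (Φ p))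
    (hΦ : HasFDerivAt Φ Φ' p) (u : F) :
    fderiv 𝕜 f p u = ℓ u + c * fderiv 𝕜 (fderiv 𝕜 G) (Φ p) (Φ' u) w := by
  have hDG : HasFDerivAt (fderiv 𝕜 G) (fderiv 𝕜 (fderiv 𝕜 G) (Φ p)) (Φ p) :=
    ((hG.fderiv_right (m := 1) le_rfl).differentiableAt one_ne_zero).hasFDerivAt
  have hf' : HasFDerivAt f
      (ℓ + c • (apply 𝕜 𝕜 w).comp ((fderiv 𝕜 (fderiv 𝕜 G) (Φ p)).comp Φ')) p := by
    rw [funext hf]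
    exact ℓ.hasFDerivAt.add (((apply 𝕜 𝕜 w).hasFDerivAt.comp p (hDG.comp p hΦ)).const_mul c)
  simp [hf'.fderiv]

end Calculus

/-- The implicit first-order method (5.1) for a Hamiltonian system preserves area:
if `X(x₀,y₀) = x₀ + h·∂H/∂y(X, y₀, τ)` and `Y(x₀,y₀) = y₀ − h·∂H/∂x(X, y₀, τ)`
with `φ = (X, Y)` differentiable and `H(·,·,τ)` twice continuously differentiable,
then the Jacobian determinant of `φ` equals `1` everywhere. -/
theorem deVogelaere_method_5_1_area_preserving
    (H : ℝ × ℝ × ℝ → ℝ) (τ : ℝ)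
    (hH : ContDiff ℝ 2 (fun p : ℝ × ℝ => H (p.1, p.2, τ))) (h : ℝ)
    (X Y : ℝ × ℝ → ℝ)
    (hφ : Differentiable ℝ (fun p : ℝ × ℝ => (X p, Y p)))
    (hX : ∀ p : ℝ × ℝ, X p = p.1 + h * deriv (fun y => H (X p, y, τ)) p.2)
    (hY : ∀ p : ℝ × ℝ, Y p = p.2 - h * deriv (fun x => H (x, p.2, τ)) (X p)) :
    ∀ p : ℝ × ℝ, (fderiv ℝ (fun q : ℝ × ℝ => (X q, Y q)) p).det = 1 := by
  intro p
  set G : ℝ × ℝ → ℝ := fun q => H (q.1, q.2, τ)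
  have hG : Differentiable ℝ G := hH.differentiable two_ne_zero
  have hX' : ∀ q, X q = fst ℝ ℝ ℝ q + h * fderiv ℝ G (X q, q.2) (0, 1) := fun q => by
    rw [← deriv_comp_prodMk_right (hG _)]
    exact hX q
  have hY' : ∀ q, Y q = snd ℝ ℝ ℝ q + -h * fderiv ℝ G (X q, q.2) (1, 0) := fun q => by
    rw [← deriv_comp_prodMk_left (hG _), neg_mul, ← sub_eq_add_neg]
    exact hY q
  have hXd : Differentiable ℝ X := hφ.fst
  have hΦ : HasFDerivAt (fun q => (X q, q.2)) ((fderiv ℝ X p).prod (snd ℝ ℝ ℝ)) p :=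
    (hXd p).hasFDerivAt.prodMk hasFDerivAt_snd
  have hsymm : IsSymmSndFDerivAt ℝ G (X p, p.2) := hH.contDiffAt.isSymmSndFDerivAt (by simp)
  rw [(hXd p).fderiv_prodMk (hφ.snd p)]
  refine det_prod_eq_one_of_symplectic_euler _ hsymm h _ _ (fun u => ?_) (fun u => ?_)
  · exact fderiv_apply_of_forall_eq_add_mul_fderiv_apply hX' hH.contDiffAt hΦ u
  · rw [fderiv_apply_of_forall_eq_add_mul_fderiv_apply hY' hH.contDiffAt hΦ u, neg_mul,
      ← sub_eq_add_neg]
    rfl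
end

section
/- Let H : ℝ × ℝ × ℝ → ℝ be three times continuously differentiable, set f = ∂H/∂y and g = −∂H/∂x, let α ∈ ℝ, and let (x, y) : ℝ → ℝ × ℝ be a solution of ẋ = f(x, y, t), ẏ = g(x, y, t) that is three times continuously differentiable near t₀, with x₀ = x(t₀), y₀ = y(t₀). Suppose X : ℝ → ℝ is continuous at 0 with X(0) = x₀ and satisfies X(h) = x₀ + h·f(X(h), y₀, t₀ + α·h) for all h near 0, and set Y(h) = y₀ + h·g(X(h), y₀, t₀ + α·h). Then, as h → 0, X(h) − x(t₀ + h) = [ −(1/2)·∂/∂y(f·g) + (α − 1/2)·∂f/∂t ]·h² + o(h²) and Y(h) − y(t₀ + h) = [ (1/2)·∂/∂x(f·g) + (α − 1/2)·∂g/∂t ]·h² + o(h²), where the bracketed coefficients are evaluated at (x₀, y₀, t₀) and ∂/∂y(f·g), ∂/∂x(f·g) are partial derivatives of the product f·g. -/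
/-!
Both the numerical step and the exact solution are expanded to second order in `h`.
Taylor's formula together with `ẍ = f_x f + f_y g + f_t` gives the exact solution, while
linearizing `f` at `(x₀, y₀, t₀)` along `(X(h) - x₀, 0, α h)`, with `X(h) - x₀ = h f + o(h)`, gives
`X(h) = x₀ + h f + (f_x f + α f_t) h² + o(h²)`, and likewise for `Y`. The difference has
coefficient `f_x f / 2 - f_y g / 2 + (α - 1/2) f_t`; since `f_x = H_yx = -g_y`, this is
`-(1/2) ∂_y(f g) + (α - 1/2) f_t`, and similarly for the second component.
-/

open Asymptotics Filter Topology

section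

variable {E : Type*} [NormedAddCommGroup E] [NormedSpace ℝ E]

theorem taylor_two_isLittleO_of_hasDerivAt_deriv {φ : ℝ → E} {t₀ : ℝ} {a : E}
    (hφ : ∀ᶠ t in 𝓝 t₀, DifferentiableAt ℝ φ t) (ha : HasDerivAt (deriv φ) a t₀) :
    (fun h : ℝ => φ (t₀ + h) - φ t₀ - h • deriv φ t₀ - (h ^ 2 / 2) • a) =o[𝓝 0]
      fun h => h ^ 2 := by
  obtain ⟨r, hr, hball⟩ := Metric.eventually_nhds_iff_ball.1 hφ
  set ψ : ℝ → E := fun t => φ t - (t - t₀) • deriv φ t₀ - ((t - t₀) ^ 2 / 2) • a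
  have hψ' : ∀ t ∈ Metric.ball t₀ r, HasDerivWithinAt ψ
      (deriv φ t - deriv φ t₀ - (t - t₀) • a) (Metric.ball t₀ r) t := by
    intro t ht
    have hlin := ((hasDerivAt_id t).sub_const t₀).smul_const (deriv φ t₀)
    have hquad := ((((hasDerivAt_id t).sub_const t₀).pow 2).div_const 2).smul_const a
    convert (((hball t ht).hasDerivAt.sub hlin).sub hquad).hasDerivWithinAt using 1
    · rfl
    · norm_num
  have hmvt := (convex_ball t₀ r).isLittleO_pow_succ_real (Metric.mem_ball_self hr) hψ'
    (n := 1) (by simpa [nhdsWithin_eq_nhds.2 (Metric.ball_mem_nhds t₀ hr)] using ha.isLittleO)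
  rw [nhdsWithin_eq_nhds.2 (Metric.ball_mem_nhds t₀ hr)] at hmvt
  have hshift : Tendsto (fun h : ℝ => t₀ + h) (𝓝 0) (𝓝 t₀) := by
    simpa using (continuous_const_add t₀).tendsto 0
  refine (hmvt.comp_tendsto hshift).congr (fun h => ?_) (fun h => ?_)
  · simp only [ψ, Function.comp_apply, add_sub_cancel_left, sub_self, zero_smul, ne_eq,
      OfNat.ofNat_ne_zero, not_false_eq_true, zero_pow, zero_div, sub_zero]
    abel
  · simp

theorem ContDiffOn.eventually_hasDerivAt {x v : ℝ → E} {s : Set ℝ} {n : WithTop ℕ∞} {t₀ : ℝ}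
    (hx : ContDiffOn ℝ n x s) (hn : n ≠ 0) (hs : s ∈ 𝓝 t₀) (hv : ∀ t ∈ s, deriv x t = v t) :
    ∀ᶠ t in 𝓝 t₀, HasDerivAt x (v t) t := by
  filter_upwards [hs, eventually_mem_nhds_iff.2 hs] with t ht hst
  exact hv t ht ▸ ((hx.differentiableOn hn).differentiableAt hst).hasDerivAt

end

section

variable {F : Type*} [NormedAddCommGroup F] [NormedSpace ℝ F]
  {Φ : ℝ × ℝ × ℝ → F} {L : ℝ × ℝ × ℝ →L[ℝ] F} {a b c : ℝ}

theorem HasFDerivAt.hasDerivAt_comp_mk₁ (hΦ : HasFDerivAt Φ L (a, b, c)) :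
    HasDerivAt (fun u => Φ (u, b, c)) (L (1, 0, 0)) a :=
  hΦ.comp_hasDerivAt a ((hasDerivAt_id a).prodMk
    ((hasDerivAt_const a b).prodMk (hasDerivAt_const a c)))

theorem HasFDerivAt.hasDerivAt_comp_mk₂ (hΦ : HasFDerivAt Φ L (a, b, c)) :
    HasDerivAt (fun u => Φ (a, u, c)) (L (0, 1, 0)) b :=
  hΦ.comp_hasDerivAt b ((hasDerivAt_const b a).prodMk
    ((hasDerivAt_id b).prodMk (hasDerivAt_const b c)))

theorem HasFDerivAt.hasDerivAt_comp_mk₃ (hΦ : HasFDerivAt Φ L (a, b, c)) :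
    HasDerivAt (fun u => Φ (a, b, u)) (L (0, 0, 1)) c :=
  hΦ.comp_hasDerivAt c ((hasDerivAt_const c a).prodMk
    ((hasDerivAt_const c b).prodMk (hasDerivAt_id c)))

theorem ContinuousLinearMap.map_mk_mk (L : ℝ × ℝ × ℝ →L[ℝ] F) (a b c : ℝ) :
    L (a, b, c) = a • L (1, 0, 0) + b • L (0, 1, 0) + c • L (0, 0, 1) := by
  rw [← map_smul, ← map_smul, ← map_smul, ← map_add, ← map_add]
  simp

end

theorem HasFDerivAt.isLittleO_smul_comp_sub {E F : Type*} [NormedAddCommGroup E]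
    [NormedSpace ℝ E] [NormedAddCommGroup F] [NormedSpace ℝ F] {Φ : E → F} {L : E →L[ℝ] F}
    {p : E} {c : ℝ → E} (hΦ : HasFDerivAt Φ L p) (hc : (fun h => c h - p) =O[𝓝 0] id) :
    (fun h : ℝ => h • (Φ (c h) - Φ p - L (c h - p))) =o[𝓝 0] fun h => h ^ 2 := by
  have hcp : Tendsto c (𝓝 0) (𝓝 p) :=
    tendsto_sub_nhds_zero_iff.1 (hc.trans_tendsto (by simpa using tendsto_id))
  have hrem := (hΦ.isLittleO.comp_tendsto hcp).trans_isBigO hc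
  exact ((isBigO_refl id (𝓝 0)).smul_isLittleO hrem).congr_right fun h => by simp [sq]

theorem implicitStep_firstOrder_isLittleO {Φ : ℝ × ℝ × ℝ → ℝ} {X : ℝ → ℝ} {x₀ y₀ t₀ α : ℝ}
    (hΦ : ContinuousAt Φ (x₀, y₀, t₀)) (hXc : ContinuousAt X 0) (hX0 : X 0 = x₀)
    (hX : ∀ᶠ h in 𝓝 0, X h = x₀ + h * Φ (X h, y₀, t₀ + α * h)) :
    (fun h => X h - x₀ - h * Φ (x₀, y₀, t₀)) =o[𝓝 0] id := by
  have hc : Tendsto (fun h => (X h, y₀, t₀ + α * h)) (𝓝 0) (𝓝 (x₀, y₀, t₀)) := by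
    refine (hX0 ▸ hXc.tendsto).prodMk_nhds (tendsto_const_nhds.prodMk_nhds ?_)
    simpa using ((continuous_const_mul α).const_add t₀).tendsto 0
  have hsmall : (fun h => Φ (X h, y₀, t₀ + α * h) - Φ (x₀, y₀, t₀)) =o[𝓝 0] (fun _ => (1 : ℝ)) :=
    (isLittleO_one_iff ℝ).2 (tendsto_sub_nhds_zero_iff.2 (hΦ.tendsto.comp hc))
  refine ((isBigO_refl id (𝓝 0)).mul_isLittleO hsmall).congr' ?_ (.of_forall fun _ => mul_one _)
  filter_upwards [hX] with h hh
  simp only [id]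
  linear_combination -hh

theorem implicitStep_sub_solution_isLittleO {Φ : ℝ × ℝ × ℝ → ℝ} {M : ℝ × ℝ × ℝ →L[ℝ] ℝ}
    {x y z X Z : ℝ → ℝ} {t₀ α u v : ℝ}
    (hΦ : HasFDerivAt Φ M (x t₀, y t₀, t₀)) (hx : HasDerivAt x u t₀) (hy : HasDerivAt y v t₀)
    (hz : ∀ᶠ t in 𝓝 t₀, HasDerivAt z (Φ (x t, y t, t)) t)
    (hX : (fun h => X h - x t₀ - h * u) =o[𝓝 0] id)
    (hZ : ∀ᶠ h in 𝓝 0, Z h = z t₀ + h * Φ (X h, y t₀, t₀ + α * h)) :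
    (fun h => Z h - z (t₀ + h)
      - (M (1, 0, 0) * u / 2 - M (0, 1, 0) * v / 2 + (α - 1 / 2) * M (0, 0, 1)) * h ^ 2)
      =o[𝓝 0] fun h => h ^ 2 := by
  have hz₀ : deriv z t₀ = Φ (x t₀, y t₀, t₀) := hz.self_of_nhds.deriv
  have hz' : HasDerivAt (deriv z) (M (u, v, 1)) t₀ :=
    (hΦ.comp_hasDerivAt t₀ (hx.prodMk (hy.prodMk (hasDerivAt_id t₀)))).congr_of_eventuallyEq
      (hz.mono fun t ht => ht.deriv)
  have htaylor := taylor_two_isLittleO_of_hasDerivAt_deriv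
    (hz.mono fun t ht => ht.differentiableAt) hz'
  have hXO : (fun h => X h - x t₀) =O[𝓝 0] id :=
    (hX.isBigO.add ((isBigO_refl id (𝓝 0)).const_mul_left u)).congr_left fun h => by
      simp only [id]; ring
  have hstep := hΦ.isLittleO_smul_comp_sub (c := fun h => (X h, y t₀, t₀ + α * h))
    ((hXO.prod_left ((isBigO_zero _ _).prod_left ((isBigO_refl id _).const_mul_left α))).congr_left
      fun h => by simp)
  have hX₂ : (fun h => h * (M (1, 0, 0) * (X h - x t₀ - h * u))) =o[𝓝 0] fun h => h ^ 2 :=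
    ((isBigO_refl id (𝓝 0)).mul_isLittleO (hX.const_mul_left _)).congr_right fun h => by
      simp [sq]
  refine ((hstep.add hX₂).sub htaylor).congr' ?_ (by simp [sq])
  filter_upwards [hZ] with h hh
  simp only [hh, hz₀, Prod.mk_sub_mk, sub_self, smul_eq_mul]
  rw [M.map_mk_mk u, M.map_mk_mk (_ - _)]
  simp only [smul_eq_mul]
  ring

theorem implicitStep_localError_isLittleO {F G : ℝ × ℝ × ℝ → ℝ} {MF MG : ℝ × ℝ × ℝ →L[ℝ] ℝ}
    {x y X Y : ℝ → ℝ} {t₀ α : ℝ}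
    (hF : HasFDerivAt F MF (x t₀, y t₀, t₀)) (hG : HasFDerivAt G MG (x t₀, y t₀, t₀))
    (hsol : ∀ᶠ t in 𝓝 t₀,
      HasDerivAt x (F (x t, y t, t)) t ∧ HasDerivAt y (G (x t, y t, t)) t)
    (hXc : ContinuousAt X 0) (hX0 : X 0 = x t₀)
    (hX : ∀ᶠ h in 𝓝 0, X h = x t₀ + h * F (X h, y t₀, t₀ + α * h))
    (hY : ∀ h, Y h = y t₀ + h * G (X h, y t₀, t₀ + α * h)) :
    ((fun h => X h - x (t₀ + h)
      - (MF (1, 0, 0) * F (x t₀, y t₀, t₀) / 2 - MF (0, 1, 0) * G (x t₀, y t₀, t₀) / 2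
        + (α - 1 / 2) * MF (0, 0, 1)) * h ^ 2) =o[𝓝 0] fun h => h ^ 2) ∧
    ((fun h => Y h - y (t₀ + h)
      - (MG (1, 0, 0) * F (x t₀, y t₀, t₀) / 2 - MG (0, 1, 0) * G (x t₀, y t₀, t₀) / 2
        + (α - 1 / 2) * MG (0, 0, 1)) * h ^ 2) =o[𝓝 0] fun h => h ^ 2) := by
  have hX₁ := implicitStep_firstOrder_isLittleO hF.continuousAt hXc hX0 hX
  obtain ⟨hx, hy⟩ := hsol.self_of_nhds
  exact ⟨implicitStep_sub_solution_isLittleO hF hx hy (hsol.mono fun _ => And.left) hX₁ hX,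
    implicitStep_sub_solution_isLittleO hG hx hy (hsol.mono fun _ => And.right) hX₁
      (.of_forall hY)⟩

/-- Local errors of the implicit first-order method (5.1) for a Hamiltonian system
`ẋ = f = ∂H/∂y`, `ẏ = g = −∂H/∂x`: with `X(h)` defined implicitly by
`X(h) = x₀ + h·f(X(h), y₀, t₀ + α·h)` and `Y(h) = y₀ + h·g(X(h), y₀, t₀ + α·h)`,
`X(h) − x(t₀+h) = [−(1/2)·∂/∂y(f·g) + (α − 1/2)·∂f/∂t]·h² + o(h²)` and
`Y(h) − y(t₀+h) = [(1/2)·∂/∂x(f·g) + (α − 1/2)·∂g/∂t]·h² + o(h²)`,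
the coefficients being evaluated at `(x₀, y₀, t₀)`. -/
theorem deVogelaere_method_5_1_local_errors
    (H : ℝ × ℝ × ℝ → ℝ) (hH : ContDiff ℝ 3 H) (α t₀ : ℝ)
    (f g : ℝ → ℝ → ℝ → ℝ)
    (hfdef : ∀ a b t : ℝ, f a b t = deriv (fun y => H (a, y, t)) b)
    (hgdef : ∀ a b t : ℝ, g a b t = - deriv (fun u => H (u, b, t)) a)
    (x y : ℝ → ℝ) (s : Set ℝ) (hs : s ∈ nhds t₀)
    (hx : ContDiffOn ℝ 3 x s) (hy : ContDiffOn ℝ 3 y s)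
    (hode : ∀ t ∈ s, deriv x t = f (x t) (y t) t ∧ deriv y t = g (x t) (y t) t)
    (X Y : ℝ → ℝ)
    (hXc : ContinuousAt X 0) (hX0 : X 0 = x t₀)
    (hXeq : ∀ᶠ h in nhds (0 : ℝ), X h = x t₀ + h * f (X h) (y t₀) (t₀ + α * h))
    (hYdef : ∀ h : ℝ, Y h = y t₀ + h * g (X h) (y t₀) (t₀ + α * h)) :
    ((fun h : ℝ =>
        X h - x (t₀ + h)
          - (-(1 / 2) * deriv (fun b => f (x t₀) b t₀ * g (x t₀) b t₀) (y t₀)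
              + (α - 1 / 2) * deriv (fun t => f (x t₀) (y t₀) t) t₀) * h ^ 2)
      =o[nhds 0] fun h : ℝ => h ^ 2) ∧
    ((fun h : ℝ =>
        Y h - y (t₀ + h)
          - ((1 / 2) * deriv (fun a => f a (y t₀) t₀ * g a (y t₀) t₀) (x t₀)
              + (α - 1 / 2) * deriv (fun t => g (x t₀) (y t₀) t) t₀) * h ^ 2)
      =o[nhds 0] fun h : ℝ => h ^ 2) := by
  set F : ℝ × ℝ × ℝ → ℝ := fun p => fderiv ℝ H p (0, 1, 0)
  set G : ℝ × ℝ × ℝ → ℝ := fun p => -fderiv ℝ H p (1, 0, 0)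
  have hfF : ∀ a b t, f a b t = F (a, b, t) := fun a b t =>
    (hfdef a b t).trans (hH.differentiable (by norm_num) _).hasFDerivAt.hasDerivAt_comp_mk₂.deriv
  have hgG : ∀ a b t, g a b t = G (a, b, t) := fun a b t => by
    rw [hgdef, (hH.differentiable (by norm_num) _).hasFDerivAt.hasDerivAt_comp_mk₁.deriv]
  set D2 := fderiv ℝ (fderiv ℝ H) (x t₀, y t₀, t₀)
  have hD2 : HasFDerivAt (fderiv ℝ H) D2 (x t₀, y t₀, t₀) :=
    ((hH.fderiv_right (m := 1) (by norm_num)).differentiable one_ne_zero _).hasFDerivAt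
  have hF : HasFDerivAt F _ (x t₀, y t₀, t₀) :=
    (ContinuousLinearMap.apply ℝ ℝ ((0, 1, 0) : ℝ × ℝ × ℝ)).hasFDerivAt.comp _ hD2
  have hG : HasFDerivAt G _ (x t₀, y t₀, t₀) :=
    ((ContinuousLinearMap.apply ℝ ℝ ((1, 0, 0) : ℝ × ℝ × ℝ)).hasFDerivAt.comp _ hD2).neg
  -- `∂f/∂x = -∂g/∂y`: both are the mixed second partial of `H`
  have hsymm : D2 (1, 0, 0) (0, 1, 0) = D2 (0, 1, 0) (1, 0, 0) :=
    hH.contDiffAt.isSymmSndFDerivAt (by norm_num) _ _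
  have hsol : ∀ᶠ t in 𝓝 t₀,
      HasDerivAt x (F (x t, y t, t)) t ∧ HasDerivAt y (G (x t, y t, t)) t :=
    (hx.eventually_hasDerivAt (by norm_num) hs fun t ht => (hode t ht).1.trans (hfF _ _ _)).and
      (hy.eventually_hasDerivAt (by norm_num) hs fun t ht => (hode t ht).2.trans (hgG _ _ _))
  obtain ⟨hXerr, hYerr⟩ := implicitStep_localError_isLittleO (Y := Y) hF hG hsol hXc hX0
    (by simpa only [hfF] using hXeq) (fun h => by rw [hYdef, hgG])
  simp only [hfF, hgG]
  rw [(hF.hasDerivAt_comp_mk₂.fun_mul hG.hasDerivAt_comp_mk₂).deriv,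
    (hF.hasDerivAt_comp_mk₁.fun_mul hG.hasDerivAt_comp_mk₁).deriv, hF.hasDerivAt_comp_mk₃.deriv,
    hG.hasDerivAt_comp_mk₃.deriv]
  refine ⟨hXerr.congr_left fun h => ?_, hYerr.congr_left fun h => ?_⟩ <;>
  · simp only [neg_apply, ContinuousLinearMap.comp_apply, ContinuousLinearMap.apply_apply, hsymm]
    ring
end

section
/- Let H : ℝ × ℝ × ℝ → ℝ (arguments (x, y, t)) be such that H(·,·,τ₁) and H(·,·,τ₂) are twice continuously differentiable for the two fixed times τ₁, τ₂, set f = ∂H/∂y and g = −∂H/∂x, and let h ∈ ℝ. Suppose φ = (X₂, Y₂) : ℝ × ℝ → ℝ × ℝ is differentiable and there are differentiable functions X₁, Y₁ : ℝ × ℝ → ℝ such that, for all (x₀, y₀): X₁ = x₀ + (h/2)·f(X₁, y₀, τ₁), Y₁ = y₀ + (h/2)·g(X₁, y₀, τ₁), Y₂ = Y₁ + (h/2)·g(X₁, Y₂, τ₂), and X₂ = X₁ + (h/2)·f(X₁, Y₂, τ₂). Then the determinant of the Fréchet derivative of φ equals 1 at every point; i.e., the implicit second-order method (6.1) applied to a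 Hamiltonian system preserves area. -/
/-!
Each half-step of (6.1) is a symplectic Euler step for the Hamiltonian `H(·, ·, τᵢ)`.
Differentiating its defining equations gives, for the differentials of the old and new
coordinates and with `c = h/2`, `db' = db - c (P da + Q db')` and `da' = da + c (Q da + R db')`
(or the mirror image with `a'` implicit), where `P, Q, R` are second partials of `H` and the
symmetry of the Hessian makes both mixed partials equal to `Q`. Such a pair of relations preserves
`ω (da, db)` for every alternating form `ω`, since `(1 + c Q) ω(da, db') = ω(da, db)` and
`ω(db', db') = 0`. For the determinant form on covectors of the plane,
`det Dφ = ω(dX₂, dY₂) = ω(dX₁, dY₁) = ω(dx, dy) = 1`.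
-/

open ContinuousLinearMap

namespace LinearMap.IsAlt

variable {R M : Type*} [CommRing R] [AddCommGroup M] [Module R M]
  {ω : M →ₗ[R] M →ₗ[R] R} (hω : ω.IsAlt) {a b a' b' : M} {c p q r : R}
include hω

theorem apply_eq_of_implicit_snd
    (hb' : b' = b - c • (p • a + q • b')) (ha' : a' = a + c • (q • a + r • b')) :
    ω a' b' = ω a b := by
  have key := congrArg (ω a) hb'
  simp only [map_sub, map_smul, map_add, hω.self_eq_zero, smul_eq_mul] at key
  rw [ha']
  simp only [map_smul, map_add, LinearMap.add_apply, LinearMap.smul_apply,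
    hω.self_eq_zero, smul_eq_mul]
  linear_combination key

theorem apply_eq_of_implicit_fst
    (ha' : a' = a + c • (q • a' + r • b)) (hb' : b' = b - c • (p • a' + q • b)) :
    ω a' b' = ω a b := by
  have key := congrArg (ω · b) ha'
  simp only [map_smul, map_add, LinearMap.add_apply, LinearMap.smul_apply, hω.self_eq_zero,
    smul_eq_mul] at key
  rw [hb']
  simp only [map_sub, map_smul, map_add, hω.self_eq_zero, smul_eq_mul]
  linear_combination key

end LinearMap.IsAlt

section AreaForm

variable {R : Type*} [CommRing R] [TopologicalSpace R] [IsTopologicalRing R]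

def areaForm : (R × R →L[R] R) →ₗ[R] (R × R →L[R] R) →ₗ[R] R :=
  LinearMap.mk₂ R (fun T U => T (1, 0) * U (0, 1) - T (0, 1) * U (1, 0))
    (fun _ _ _ => by simp only [add_apply]; ring)
    (fun _ _ _ => by simp only [smul_apply, smul_eq_mul]; ring)
    (fun _ _ _ => by simp only [add_apply]; ring)
    (fun _ _ _ => by simp only [smul_apply, smul_eq_mul]; ring)

theorem areaForm_apply (T U : R × R →L[R] R) :
    areaForm T U = T (1, 0) * U (0, 1) - T (0, 1) * U (1, 0) := rfl

theorem areaForm_isAlt : (areaForm (R := R)).IsAlt := fun T => by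
  rw [areaForm_apply]; ring

theorem areaForm_fst_snd : areaForm (fst R R R) (snd R R R) = 1 := by
  simp [areaForm_apply]

theorem ContinuousLinearMap.det_prod (T U : R × R →L[R] R) : (T.prod U).det = areaForm T U := by
  rw [ContinuousLinearMap.det, ← LinearMap.det_toMatrix (Module.Basis.finTwoProd R),
    Matrix.det_fin_two, areaForm_apply]
  simp [LinearMap.toMatrix_apply]

end AreaForm

section Slices

variable {𝕜 G : Type*} [NontriviallyNormedField 𝕜] [NormedAddCommGroup G] [NormedSpace 𝕜 G]
  {F : 𝕜 × 𝕜 → G} {a b : 𝕜}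

theorem DifferentiableAt.deriv_slice_fst (hF : DifferentiableAt 𝕜 F (a, b)) :
    deriv (fun x => F (x, b)) a = fderiv 𝕜 F (a, b) (1, 0) :=
  (hF.hasFDerivAt.comp_hasDerivAt a ((hasDerivAt_id a).prodMk (hasDerivAt_const a b))).deriv

theorem DifferentiableAt.deriv_slice_snd (hF : DifferentiableAt 𝕜 F (a, b)) :
    deriv (fun y => F (a, y)) b = fderiv 𝕜 F (a, b) (0, 1) :=
  (hF.hasFDerivAt.comp_hasDerivAt b ((hasDerivAt_const b a).prodMk (hasDerivAt_id b))).deriv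

end Slices

section SecondDerivative

variable {𝕜 E : Type*} [NontriviallyNormedField 𝕜] [NormedAddCommGroup E] [NormedSpace 𝕜 E]
  {F : 𝕜 × 𝕜 → 𝕜} {u₁ u₂ : E → 𝕜} {u₁' u₂' : E →L[𝕜] 𝕜} {p : E}

theorem hasFDerivAt_fderiv_apply_prodMk (hF : DifferentiableAt 𝕜 (fderiv 𝕜 F) (u₁ p, u₂ p))
    (h₁ : HasFDerivAt u₁ u₁' p) (h₂ : HasFDerivAt u₂ u₂' p) (v : 𝕜 × 𝕜) :
    HasFDerivAt (fun q => fderiv 𝕜 F (u₁ q, u₂ q) v)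
      (fderiv 𝕜 (fderiv 𝕜 F) (u₁ p, u₂ p) (1, 0) v • u₁' +
        fderiv 𝕜 (fderiv 𝕜 F) (u₁ p, u₂ p) (0, 1) v • u₂') p := by
  refine ((ContinuousLinearMap.apply 𝕜 𝕜 v).hasFDerivAt.comp p
    (hF.hasFDerivAt.comp p (h₁.prodMk h₂))).congr_fderiv (ContinuousLinearMap.ext fun w => ?_)
  have hw : (u₁' w, u₂' w) = u₁' w • ((1, 0) : 𝕜 × 𝕜) + u₂' w • ((0, 1) : 𝕜 × 𝕜) := by
    simp
  simp only [add_apply, smul_apply, smul_eq_mul, comp_apply, prod_apply, apply_apply, hw,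
    map_add, map_smul]
  ring

end SecondDerivative

section Step

variable {𝕜 E : Type*} [RCLike 𝕜] [NormedAddCommGroup E] [NormedSpace 𝕜 E]
  {ω : (E →L[𝕜] 𝕜) →ₗ[𝕜] (E →L[𝕜] 𝕜) →ₗ[𝕜] 𝕜} {F : 𝕜 × 𝕜 → 𝕜} {x y x' y' : E → 𝕜} {c : 𝕜}
  {p : E}

theorem LinearMap.IsAlt.apply_fderiv_eq_of_implicit_snd (hω : ω.IsAlt)
    (hF : ContDiffAt 𝕜 2 F (x p, y' p)) (hx : DifferentiableAt 𝕜 x p)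
    (hy : DifferentiableAt 𝕜 y p) (hy' : DifferentiableAt 𝕜 y' p)
    (hy'eq : ∀ q, y' q = y q - c * fderiv 𝕜 F (x q, y' q) (1, 0))
    (hx'eq : ∀ q, x' q = x q + c * fderiv 𝕜 F (x q, y' q) (0, 1)) :
    ω (fderiv 𝕜 x' p) (fderiv 𝕜 y' p) = ω (fderiv 𝕜 x p) (fderiv 𝕜 y p) := by
  have hD := (hF.fderiv_right (m := 1) le_rfl).differentiableAt one_ne_zero
  have hDy' := ((hy.hasFDerivAt.sub ((hasFDerivAt_fderiv_apply_prodMk hD hx.hasFDerivAt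
    hy'.hasFDerivAt (1, 0)).const_mul c)).congr_of_eventuallyEq (.of_forall hy'eq)).fderiv
  have hDx' := ((hx.hasFDerivAt.add ((hasFDerivAt_fderiv_apply_prodMk hD hx.hasFDerivAt
    hy'.hasFDerivAt (0, 1)).const_mul c)).congr_of_eventuallyEq (.of_forall hx'eq)).fderiv
  rw [← hF.isSymmSndFDerivAt (by simp) (1, 0) (0, 1)] at hDy'
  exact hω.apply_eq_of_implicit_snd hDy' hDx'

theorem LinearMap.IsAlt.apply_fderiv_eq_of_implicit_fst (hω : ω.IsAlt)
    (hF : ContDiffAt 𝕜 2 F (x' p, y p)) (hx : DifferentiableAt 𝕜 x p)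
    (hy : DifferentiableAt 𝕜 y p) (hx' : DifferentiableAt 𝕜 x' p)
    (hx'eq : ∀ q, x' q = x q + c * fderiv 𝕜 F (x' q, y q) (0, 1))
    (hy'eq : ∀ q, y' q = y q - c * fderiv 𝕜 F (x' q, y q) (1, 0)) :
    ω (fderiv 𝕜 x' p) (fderiv 𝕜 y' p) = ω (fderiv 𝕜 x p) (fderiv 𝕜 y p) := by
  have hD := (hF.fderiv_right (m := 1) le_rfl).differentiableAt one_ne_zero
  have hDx' := ((hx.hasFDerivAt.add ((hasFDerivAt_fderiv_apply_prodMk hD hx'.hasFDerivAt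
    hy.hasFDerivAt (0, 1)).const_mul c)).congr_of_eventuallyEq (.of_forall hx'eq)).fderiv
  have hDy' := ((hy.hasFDerivAt.sub ((hasFDerivAt_fderiv_apply_prodMk hD hx'.hasFDerivAt
    hy.hasFDerivAt (1, 0)).const_mul c)).congr_of_eventuallyEq (.of_forall hy'eq)).fderiv
  rw [← hF.isSymmSndFDerivAt (by simp) (1, 0) (0, 1)] at hDy'
  exact hω.apply_eq_of_implicit_fst hDx' hDy'

end Step

/-- The implicit second-order method (6.1) for a Hamiltonian system
(`f = ∂H/∂y`, `g = −∂H/∂x`) preserves area: with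
`X₁ = x₀ + (h/2)·f(X₁, y₀, τ₁)`, `Y₁ = y₀ + (h/2)·g(X₁, y₀, τ₁)`,
`Y₂ = Y₁ + (h/2)·g(X₁, Y₂, τ₂)`, `X₂ = X₁ + (h/2)·f(X₁, Y₂, τ₂)`,
and `φ = (X₂, Y₂)` differentiable, the Jacobian determinant of `φ` equals `1`
everywhere. -/
theorem deVogelaere_method_6_1_area_preserving
    (H : ℝ × ℝ × ℝ → ℝ) (τ₁ τ₂ : ℝ)
    (hH₁ : ContDiff ℝ 2 (fun p : ℝ × ℝ => H (p.1, p.2, τ₁)))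
    (hH₂ : ContDiff ℝ 2 (fun p : ℝ × ℝ => H (p.1, p.2, τ₂)))
    (f g : ℝ → ℝ → ℝ → ℝ)
    (hfdef : ∀ a b t : ℝ, f a b t = deriv (fun y => H (a, y, t)) b)
    (hgdef : ∀ a b t : ℝ, g a b t = - deriv (fun u => H (u, b, t)) a)
    (h : ℝ)
    (X₁ Y₁ X₂ Y₂ : ℝ × ℝ → ℝ)
    (hX₁d : Differentiable ℝ X₁) (hY₁d : Differentiable ℝ Y₁)
    (hφ : Differentiable ℝ (fun p : ℝ × ℝ => (X₂ p, Y₂ p)))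
    (hX₁ : ∀ p : ℝ × ℝ, X₁ p = p.1 + h / 2 * f (X₁ p) p.2 τ₁)
    (hY₁ : ∀ p : ℝ × ℝ, Y₁ p = p.2 + h / 2 * g (X₁ p) p.2 τ₁)
    (hY₂ : ∀ p : ℝ × ℝ, Y₂ p = Y₁ p + h / 2 * g (X₁ p) (Y₂ p) τ₂)
    (hX₂ : ∀ p : ℝ × ℝ, X₂ p = X₁ p + h / 2 * f (X₁ p) (Y₂ p) τ₂) :
    ∀ p : ℝ × ℝ, (fderiv ℝ (fun q : ℝ × ℝ => (X₂ q, Y₂ q)) p).det = 1 := by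
  intro p
  set F₁ : ℝ × ℝ → ℝ := fun q => H (q.1, q.2, τ₁)
  set F₂ : ℝ × ℝ → ℝ := fun q => H (q.1, q.2, τ₂)
  have hf₁ a b : f a b τ₁ = fderiv ℝ F₁ (a, b) (0, 1) :=
    (hfdef a b τ₁).trans (hH₁.differentiable two_ne_zero _).deriv_slice_snd
  have hf₂ a b : f a b τ₂ = fderiv ℝ F₂ (a, b) (0, 1) :=
    (hfdef a b τ₂).trans (hH₂.differentiable two_ne_zero _).deriv_slice_snd
  have hg₁ a b : g a b τ₁ = -fderiv ℝ F₁ (a, b) (1, 0) := by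
    rw [hgdef, (hH₁.differentiable two_ne_zero _).deriv_slice_fst]
  have hg₂ a b : g a b τ₂ = -fderiv ℝ F₂ (a, b) (1, 0) := by
    rw [hgdef, (hH₂.differentiable two_ne_zero _).deriv_slice_fst]
  have step₁ : areaForm (fderiv ℝ X₁ p) (fderiv ℝ Y₁ p) = 1 := by
    rw [areaForm_isAlt.apply_fderiv_eq_of_implicit_fst (x := Prod.fst) (y := Prod.snd)
      (c := h / 2) hH₁.contDiffAt differentiableAt_fst differentiableAt_snd (hX₁d p)
      (fun q => (hX₁ q).trans (by rw [hf₁])) (fun q => (hY₁ q).trans (by rw [hg₁]; ring)),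
      fderiv_fst, fderiv_snd, areaForm_fst_snd]
  have step₂ : areaForm (fderiv ℝ X₂ p) (fderiv ℝ Y₂ p) =
      areaForm (fderiv ℝ X₁ p) (fderiv ℝ Y₁ p) :=
    areaForm_isAlt.apply_fderiv_eq_of_implicit_snd (c := h / 2) hH₂.contDiffAt (hX₁d p)
      (hY₁d p) (hφ.snd p)
      (fun q => (hY₂ q).trans (by rw [hg₂]; ring)) (fun q => (hX₂ q).trans (by rw [hf₂]))
  rw [(hφ.fst p).fderiv_prodMk (hφ.snd p), det_prod, step₂, step₁]
end

section
/- Let f, g : ℝ × ℝ × ℝ → ℝ be twice continuously differentiable, α ∈ ℝ, and let (x, y) : ℝ → ℝ × ℝ be a solution of ẋ = f(x, y, t), ẏ = g(x, y, t) that is three times continuously differentiable near t₀, with x₀ = x(t₀), y₀ = y(t₀). Suppose X₁, Y₂ : ℝ → ℝ are continuous at 0 with X₁(0) = x₀, Y₂(0) = y₀ and for all h near 0 satisfy: X₁(h) = x₀ + (h/2)·f(X₁(h), y₀, t₀ + α·h), Y₁(h) = y₀ + (h/2)·g(X₁(h), y₀, t₀ + α·h), Y₂(h) = Y₁(h) +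 (h/2)·g(X₁(h), Y₂(h), t₀ + (1−α)·h), and set X₂(h) = X₁(h) + (h/2)·f(X₁(h), Y₂(h), t₀ + (1−α)·h). Then the method is second order: as h → 0, X₂(h) − x(t₀ + h) = o(h²) and Y₂(h) − y(t₀ + h) = o(h²). -/
/-!
Both numerical values have the form `u h = u 0 + (h / 2) • (φ (A h) + φ (B h))`, with `φ = f` or
`φ = g` and stage points `A h = (X₁ h, y₀, t₀ + α h)`, `B h = (X₁ h, Y₂ h, t₀ + (1 - α) h)`.
The implicit stages are first-order accurate, so `A` and `B` have velocities
`(f₀ / 2, 0, α)` and `(f₀ / 2, g₀, 1 - α)` at `h = 0`; these add up to the velocity `(f₀, g₀, 1)` of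
the solution curve `t ↦ (x t, y t, t)`. Hence the `h²`-coefficient of `u` is `½ Dφ (f₀, g₀, 1)`,
which is half the second derivative of the exact solution, and the two Taylor expansions agree
up to `o(h²)`.
-/

open Asymptotics Filter Topology Metric

section Expansion

variable {E : Type*} [NormedAddCommGroup E] [NormedSpace ℝ E]

theorem ContDiffOn.eventually_hasDerivAt_of_deriv_eq {u w : ℝ → E} {s : Set ℝ}
    {n : WithTop ℕ∞} {t₀ : ℝ} (hu : ContDiffOn ℝ n u s) (hn : n ≠ 0) (hs : s ∈ 𝓝 t₀)
    (hw : ∀ t ∈ s, deriv u t = w t) :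
    ∀ᶠ t in 𝓝 t₀, HasDerivAt u (w t) t := by
  filter_upwards [eventually_mem_nhds_iff.2 hs, hs] with t ht hts
  exact hw t hts ▸ ((hu.contDiffAt ht).differentiableAt hn).hasDerivAt

theorem isLittleO_taylor_two {v v' : ℝ → E} {a : E} {t₀ : ℝ}
    (hv : ∀ᶠ t in 𝓝 t₀, HasDerivAt v (v' t) t) (hv' : HasDerivAt v' a t₀) :
    (fun h : ℝ => v (t₀ + h) - v t₀ - h • v' t₀ - (h ^ 2 / 2) • a) =o[𝓝 0] fun h => h ^ 2 := by
  obtain ⟨δ, hδ, hball⟩ := eventually_nhds_iff_ball.mp hv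
  have hnhds : 𝓝[ball t₀ δ] t₀ = 𝓝 t₀ := isOpen_ball.nhdsWithin_eq (mem_ball_self hδ)
  have hderiv : ∀ t ∈ ball t₀ δ, HasDerivWithinAt
      (fun t => v t - (t - t₀) • v' t₀ - ((t - t₀) ^ 2 / 2) • a)
      (v' t - v' t₀ - (t - t₀) • a) (ball t₀ δ) t := by
    intro t ht
    have hsq : HasDerivAt (fun t : ℝ => (t - t₀) ^ 2 / 2) (t - t₀) t := by
      simpa using (((hasDerivAt_id t).sub_const t₀).pow 2).div_const 2
    exact (((hball t ht).sub (((hasDerivAt_id t).sub_const t₀).smul_const (v' t₀))).sub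
      (hsq.smul_const a)).hasDerivWithinAt.congr_deriv (by simp)
  have hsmall : (fun t => v' t - v' t₀ - (t - t₀) • a) =o[𝓝[ball t₀ δ] t₀]
      fun t => (t - t₀) ^ 1 := by
    simpa [hnhds] using hasDerivAt_iff_isLittleO.mp hv'
  have key := (convex_ball t₀ δ).isLittleO_pow_succ_real (mem_ball_self hδ) hderiv hsmall
  rw [hnhds] at key
  have hshift : Tendsto (fun h : ℝ => t₀ + h) (𝓝 0) (𝓝 t₀) := by
    simpa using (continuous_const_add t₀).tendsto 0
  refine (key.comp_tendsto hshift).congr' ?_ ?_ <;> filter_upwards with h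
  · simp only [Function.comp_apply, add_sub_cancel_left, sub_self, zero_smul, sub_zero, ne_eq,
      OfNat.ofNat_ne_zero, not_false_eq_true, zero_pow, zero_div]
    abel
  · simp

theorem hasDerivAt_of_eventuallyEq_add_smul {u Φ : ℝ → E}
    (hu : ∀ᶠ h in 𝓝 0, u h = u 0 + h • Φ h) (hΦ : ContinuousAt Φ 0) :
    HasDerivAt u (Φ 0) 0 := by
  rw [hasDerivAt_iff_tendsto_slope_zero]
  refine (hΦ.tendsto.mono_left nhdsWithin_le_nhds).congr' ?_
  filter_upwards [nhdsWithin_le_nhds hu, self_mem_nhdsWithin] with h hh (hh0 : h ≠ 0)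
  rw [zero_add, hh, add_sub_cancel_left, inv_smul_smul₀ hh0]

theorem isLittleO_sq_of_eventuallyEq_add_smul {u v v' Φ : ℝ → E} {a : E} {t₀ : ℝ}
    (hu : ∀ᶠ h in 𝓝 0, u h = v t₀ + h • Φ h) (hΦ : HasDerivAt Φ ((2 : ℝ)⁻¹ • a) 0)
    (hΦ0 : Φ 0 = v' t₀) (hv : ∀ᶠ t in 𝓝 t₀, HasDerivAt v (v' t) t)
    (hv' : HasDerivAt v' a t₀) :
    (fun h => u h - v (t₀ + h)) =o[𝓝 0] fun h => h ^ 2 := by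
  have hrem : (fun h : ℝ => h • (Φ h - Φ 0 - h • (2 : ℝ)⁻¹ • a)) =o[𝓝 0] fun h => h ^ 2 := by
    simpa [sq] using (isBigO_refl id _).smul_isLittleO (hasDerivAt_iff_isLittleO.mp hΦ)
  refine (hrem.sub (isLittleO_taylor_two hv hv')).congr' ?_ EventuallyEq.rfl
  filter_upwards [hu] with h hh
  rw [hh, hΦ0]
  module

theorem isLittleO_sq_of_two_stage {P : Type*} [NormedAddCommGroup P] [NormedSpace ℝ P]
    {φ : P → E} {γ A B : ℝ → P} {a b : P} {u v : ℝ → E} {t₀ : ℝ}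
    (hφ : DifferentiableAt ℝ φ (γ t₀)) (hγ : HasDerivAt γ (a + b) t₀)
    (hv : ∀ᶠ t in 𝓝 t₀, HasDerivAt v (φ (γ t)) t)
    (hA : HasDerivAt A a 0) (hA0 : A 0 = γ t₀) (hB : HasDerivAt B b 0) (hB0 : B 0 = γ t₀)
    (hu : ∀ᶠ h in 𝓝 0, u h = v t₀ + (h / 2) • (φ (A h) + φ (B h))) :
    (fun h => u h - v (t₀ + h)) =o[𝓝 0] fun h => h ^ 2 := by
  have hφ' := hφ.hasFDerivAt
  have hΦ : HasDerivAt (fun h => (2 : ℝ)⁻¹ • (φ (A h) + φ (B h)))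
      ((2 : ℝ)⁻¹ • fderiv ℝ φ (γ t₀) (a + b)) 0 := by
    refine (((hφ'.comp_hasDerivAt_of_eq 0 hA hA0.symm).add
      (hφ'.comp_hasDerivAt_of_eq 0 hB hB0.symm)).fun_const_smul (2 : ℝ)⁻¹).congr_deriv ?_
    rw [map_add]
  refine isLittleO_sq_of_eventuallyEq_add_smul ?_ hΦ ?_ hv
    (hφ'.comp_hasDerivAt_of_eq t₀ hγ rfl)
  · filter_upwards [hu] with h hh
    rw [hh, smul_smul, div_eq_mul_inv]
  · simp [hA0, hB0, ← two_smul ℝ]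

end Expansion

theorem hasDerivAt_stage_point {X Y : ℝ → ℝ} {a b : ℝ} (hX : HasDerivAt X a 0)
    (hY : HasDerivAt Y b 0) (t₀ c : ℝ) :
    HasDerivAt (fun h => (X h, Y h, t₀ + c * h)) (a, b, c) 0 :=
  hX.prodMk (hY.prodMk (by simpa using ((hasDerivAt_id' (0 : ℝ)).const_mul c).const_add t₀))

section Stages

variable {f g : ℝ × ℝ × ℝ → ℝ} {α t₀ x₀ y₀ : ℝ} {X₁ Y₂ : ℝ → ℝ}

theorem hasDerivAt_first_stage (hf : Continuous f) (hX₁c : ContinuousAt X₁ 0)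
    (hX₁0 : X₁ 0 = x₀) (hX₁eq : ∀ᶠ h in 𝓝 0, X₁ h = x₀ + h / 2 * f (X₁ h, y₀, t₀ + α * h)) :
    HasDerivAt X₁ (f (x₀, y₀, t₀) / 2) 0 := by
  have hΦ : ContinuousAt (fun h => f (X₁ h, y₀, t₀ + α * h) / 2) 0 := by fun_prop
  refine (hasDerivAt_of_eventuallyEq_add_smul ?_ hΦ).congr_deriv (by simp [hX₁0])
  filter_upwards [hX₁eq] with h hh
  rw [hX₁0, smul_eq_mul]
  linear_combination hh

theorem hasDerivAt_second_stage (hg : Continuous g) (hX₁c : ContinuousAt X₁ 0)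
    (hX₁0 : X₁ 0 = x₀) (hY₂c : ContinuousAt Y₂ 0) (hY₂0 : Y₂ 0 = y₀)
    (hY₂eq : ∀ᶠ h in 𝓝 0, Y₂ h = y₀ + h / 2 *
      (g (X₁ h, y₀, t₀ + α * h) + g (X₁ h, Y₂ h, t₀ + (1 - α) * h))) :
    HasDerivAt Y₂ (g (x₀, y₀, t₀)) 0 := by
  have hΦ : ContinuousAt (fun h =>
      (g (X₁ h, y₀, t₀ + α * h) + g (X₁ h, Y₂ h, t₀ + (1 - α) * h)) / 2) 0 := by fun_prop
  refine (hasDerivAt_of_eventuallyEq_add_smul ?_ hΦ).congr_deriv (by simp [hX₁0, hY₂0])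
  filter_upwards [hY₂eq] with h hh
  rw [hY₂0, smul_eq_mul]
  linear_combination hh

end Stages

/-- The implicit method (6.1) is second order: with
`X₁(h) = x₀ + (h/2)·f(X₁(h), y₀, t₀ + α·h)`,
`Y₁(h) = y₀ + (h/2)·g(X₁(h), y₀, t₀ + α·h)`,
`Y₂(h) = Y₁(h) + (h/2)·g(X₁(h), Y₂(h), t₀ + (1−α)·h)`,
`X₂(h) = X₁(h) + (h/2)·f(X₁(h), Y₂(h), t₀ + (1−α)·h)`, one has
`X₂(h) − x(t₀ + h) = o(h²)` and `Y₂(h) − y(t₀ + h) = o(h²)` as `h → 0`. -/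
theorem deVogelaere_method_6_1_second_order
    (f g : ℝ × ℝ × ℝ → ℝ) (hf : ContDiff ℝ 2 f) (hg : ContDiff ℝ 2 g)
    (α t₀ : ℝ)
    (x y : ℝ → ℝ) (s : Set ℝ) (hs : s ∈ nhds t₀)
    (hx : ContDiffOn ℝ 3 x s) (hy : ContDiffOn ℝ 3 y s)
    (hode : ∀ t ∈ s,
      deriv x t = f (x t, y t, t) ∧ deriv y t = g (x t, y t, t))
    (X₁ Y₁ X₂ Y₂ : ℝ → ℝ)
    (hX₁c : ContinuousAt X₁ 0) (hX₁0 : X₁ 0 = x t₀)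
    (hY₂c : ContinuousAt Y₂ 0) (hY₂0 : Y₂ 0 = y t₀)
    (hX₁eq : ∀ᶠ h in nhds (0 : ℝ),
      X₁ h = x t₀ + h / 2 * f (X₁ h, y t₀, t₀ + α * h))
    (hY₁eq : ∀ᶠ h in nhds (0 : ℝ),
      Y₁ h = y t₀ + h / 2 * g (X₁ h, y t₀, t₀ + α * h))
    (hY₂eq : ∀ᶠ h in nhds (0 : ℝ),
      Y₂ h = Y₁ h + h / 2 * g (X₁ h, Y₂ h, t₀ + (1 - α) * h))
    (hX₂eq : ∀ h : ℝ,
      X₂ h = X₁ h + h / 2 * f (X₁ h, Y₂ h, t₀ + (1 - α) * h)) :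
    ((fun h : ℝ => X₂ h - x (t₀ + h)) =o[nhds 0] fun h : ℝ => h ^ 2) ∧
    ((fun h : ℝ => Y₂ h - y (t₀ + h)) =o[nhds 0] fun h : ℝ => h ^ 2) := by
  have hxd := hx.eventually_hasDerivAt_of_deriv_eq (by simp) hs fun t ht => (hode t ht).1
  have hyd := hy.eventually_hasDerivAt_of_deriv_eq (by simp) hs fun t ht => (hode t ht).2
  set p₀ : ℝ × ℝ × ℝ := (x t₀, y t₀, t₀)
  have hγ : HasDerivAt (fun t => (x t, y t, t))
      ((f p₀ / 2, 0, α) + (f p₀ / 2, g p₀, 1 - α)) t₀ := by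
    refine (hxd.self_of_nhds.prodMk (hyd.self_of_nhds.prodMk (hasDerivAt_id' t₀))).congr_deriv ?_
    rw [Prod.mk_add_mk, Prod.mk_add_mk, add_halves, zero_add, add_sub_cancel]
  have hX₁d := hasDerivAt_first_stage hf.continuous hX₁c hX₁0 hX₁eq
  have hY₂step : ∀ᶠ h in 𝓝 0, Y₂ h = y t₀ + h / 2 *
      (g (X₁ h, y t₀, t₀ + α * h) + g (X₁ h, Y₂ h, t₀ + (1 - α) * h)) := by
    filter_upwards [hY₁eq, hY₂eq] with h h₁ h₂
    linear_combination h₂ + h₁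
  have hY₂d := hasDerivAt_second_stage hg.continuous hX₁c hX₁0 hY₂c hY₂0 hY₂step
  have hA := hasDerivAt_stage_point hX₁d (hasDerivAt_const 0 (y t₀)) t₀ α
  have hB := hasDerivAt_stage_point hX₁d hY₂d t₀ (1 - α)
  constructor
  · refine isLittleO_sq_of_two_stage (hf.differentiable (by simp)).differentiableAt hγ hxd
      hA (by simp [hX₁0]) hB (by simp [hX₁0, hY₂0]) ?_
    filter_upwards [hX₁eq] with h hh
    rw [hX₂eq h, smul_eq_mul]
    linear_combination hh
  · exact isLittleO_sq_of_two_stage (hg.differentiable (by simp)).differentiableAt hγ hyd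
      hA (by simp [hX₁0]) hB (by simp [hX₁0, hY₂0]) hY₂step
end

section
/- Let n ∈ ℕ, let H : (EuclideanSpace ℝ (Fin n)) × (EuclideanSpace ℝ (Fin n)) → ℝ be twice continuously differentiable (arguments (q, p); the time is a fixed parameter absorbed into H), let h ∈ ℝ, and denote by ∇₁H and ∇₂H the gradients of H with respect to its first and second argument. Suppose φ = (Q, P) : ℝⁿ × ℝⁿ → ℝⁿ × ℝⁿ is differentiable and satisfies, for all (α, β): Q(α, β) = α + h·∇₂H(Q(α, β), β) and P(α, β) = β − h·∇₁H(Q(α, β), β). Then φ is a contact (canonical/symplectic) transformation: for every point z and all tangent vectors u = (u₁, u₂), v = (v₁, v₂) in ℝⁿ × ℝⁿ, ω(Dφ(z)u, Dφ(z)v) = ω(u, v), where ω((a, b), (a', b')) = ⟨a, b'⟩ − ⟨b, a'⟩ is the standard symplectic form. -/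
open RealInnerProductSpace ContinuousLinearMap

/-!
Pairing the defining equations of `Q` and `P` with a test vector `y` turns the gradients into
first derivatives of `H`; differentiating at `z` in the direction `u` then gives, with
`L = D²H(Q z, z.2)` and `ξᵤ = (DQ u, u.2)`,
`⟪y, DQ u⟫ = ⟪y, u.1⟫ + h L ξᵤ (0, y)` and `⟪y, DP u⟫ = ⟪y, u.2⟫ - h L ξᵤ (y, 0)`.
Substituting these into `ω(Dφ u, Dφ v)` leaves `ω(u, v) + h (L ξᵤ ξᵥ - L ξᵥ ξᵤ)`, and the last
term vanishes by the symmetry of the second derivative.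
-/

theorem hasFDerivAt_fderiv_comp_apply {F G : Type*} [NormedAddCommGroup F] [NormedSpace ℝ F]
    [NormedAddCommGroup G] [NormedSpace ℝ G] {H : F → ℝ} {ψ : G → F} {ψ' : G →L[ℝ] F} {z : G}
    (hH : DifferentiableAt ℝ (fderiv ℝ H) (ψ z)) (hψ : HasFDerivAt ψ ψ' z) (k : F) :
    HasFDerivAt (fun w => fderiv ℝ H (ψ w) k) ((fderiv ℝ (fderiv ℝ H) (ψ z) ∘L ψ').flip k) z := by
  simpa using (hH.hasFDerivAt.comp z hψ).clm_apply (hasFDerivAt_const k z)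

section

variable {E : Type*} [NormedAddCommGroup E] [InnerProductSpace ℝ E]

def symplecticForm (x y : E × E) : ℝ := ⟪x.1, y.2⟫ - ⟪x.2, y.1⟫

theorem symplecticForm_eq_of_linearized_symplecticEuler {h : ℝ} {A B : E × E → E}
    {L : E × E →L[ℝ] E × E →L[ℝ] ℝ} (hL : ∀ a b, L a b = L b a)
    (hA : ∀ y u, ⟪y, A u⟫ = ⟪y, u.1⟫ + h * L (A u, u.2) (0, y))
    (hB : ∀ y u, ⟪y, B u⟫ = ⟪y, u.2⟫ - h * L (A u, u.2) (y, 0)) (u v : E × E) :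
    symplecticForm (A u, B u) (A v, B v) = symplecticForm u v := by
  have hsplit : ∀ (w : E × E) (a c : E), L w (a, 0) + L w (0, c) = L w (a, c) :=
    fun w a c => by rw [← map_add, Prod.mk_add_mk, add_zero, zero_add]
  unfold symplecticForm
  dsimp only
  rw [real_inner_comm (A v) (B u), hB, hB, real_inner_comm v.2 (A u), real_inner_comm u.2 (A v),
    hA, hA, real_inner_comm u.1 v.2]
  linear_combination h * (hsplit (A u, u.2) (A v) v.2 - hsplit (A v, v.2) (A u) u.2
    + hL (A u, u.2) (A v, v.2))

variable [CompleteSpace E]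

theorem inner_gradient_partial_snd {H : E × E → ℝ} {a b : E} (hH : DifferentiableAt ℝ H (a, b))
    (y : E) : ⟪y, gradient (fun p => H (a, p)) b⟫ = fderiv ℝ H (a, b) (0, y) := by
  have hd : HasFDerivAt (fun p => H (a, p)) (fderiv ℝ H (a, b) ∘L inr ℝ E E) b :=
    hH.hasFDerivAt.comp b (hasFDerivAt_prodMk_right a b)
  rw [hd.hasGradientAt.gradient, real_inner_comm, InnerProductSpace.toDual_symm_apply]
  rfl

theorem inner_gradient_partial_fst {H : E × E → ℝ} {a b : E} (hH : DifferentiableAt ℝ H (a, b))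
    (y : E) : ⟪y, gradient (fun q => H (q, b)) a⟫ = fderiv ℝ H (a, b) (y, 0) := by
  have hd : HasFDerivAt (fun q => H (q, b)) (fderiv ℝ H (a, b) ∘L inl ℝ E E) a :=
    hH.hasFDerivAt.comp a (hasFDerivAt_prodMk_left a b)
  rw [hd.hasGradientAt.gradient, real_inner_comm, InnerProductSpace.toDual_symm_apply]
  rfl

variable {H : E × E → ℝ} {h : ℝ} {Q P : E × E → E} {z : E × E}

theorem inner_fderiv_eq_of_eq_add_smul_gradient (hH : ContDiff ℝ 2 H) (hQd : DifferentiableAt ℝ Q z)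
    (hQ : ∀ w, Q w = w.1 + h • gradient (fun p => H (Q w, p)) w.2) (y : E) (u : E × E) :
    ⟪y, fderiv ℝ Q z u⟫ =
      ⟪y, u.1⟫ + h * fderiv ℝ (fderiv ℝ H) (Q z, z.2) (fderiv ℝ Q z u, u.2) (0, y) := by
  have hpair : ∀ w, ⟪y, Q w⟫ = ⟪y, w.1⟫ + h * fderiv ℝ H (Q w, w.2) (0, y) := fun w => by
    conv_lhs => rw [hQ w]
    rw [inner_add_right, real_inner_smul_right,
      inner_gradient_partial_snd (hH.differentiable two_ne_zero _)]
  have hrhs := ((innerSL ℝ y ∘L fst ℝ E E).hasFDerivAt (x := z)).add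
    ((hasFDerivAt_fderiv_comp_apply
      ((hH.fderiv_right one_add_one_eq_two.le).differentiable one_ne_zero _)
      (hQd.hasFDerivAt.prodMk hasFDerivAt_snd) (0, y)).const_mul h)
  simpa using congrArg (· u) (((innerSL ℝ y).hasFDerivAt.comp z hQd.hasFDerivAt).unique
    (hrhs.congr_of_eventuallyEq (.of_forall hpair)))

theorem inner_fderiv_eq_of_eq_sub_smul_gradient (hH : ContDiff ℝ 2 H) (hQd : DifferentiableAt ℝ Q z)
    (hPd : DifferentiableAt ℝ P z)
    (hP : ∀ w, P w = w.2 - h • gradient (fun q => H (q, w.2)) (Q w)) (y : E) (u : E × E) :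
    ⟪y, fderiv ℝ P z u⟫ =
      ⟪y, u.2⟫ - h * fderiv ℝ (fderiv ℝ H) (Q z, z.2) (fderiv ℝ Q z u, u.2) (y, 0) := by
  have hpair : ∀ w, ⟪y, P w⟫ = ⟪y, w.2⟫ - h * fderiv ℝ H (Q w, w.2) (y, 0) := fun w => by
    conv_lhs => rw [hP w]
    rw [inner_sub_right, real_inner_smul_right,
      inner_gradient_partial_fst (hH.differentiable two_ne_zero _)]
  have hrhs := ((innerSL ℝ y ∘L snd ℝ E E).hasFDerivAt (x := z)).sub
    ((hasFDerivAt_fderiv_comp_apply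
      ((hH.fderiv_right one_add_one_eq_two.le).differentiable one_ne_zero _)
      (hQd.hasFDerivAt.prodMk hasFDerivAt_snd) (y, 0)).const_mul h)
  simpa using congrArg (· u) (((innerSL ℝ y).hasFDerivAt.comp z hPd.hasFDerivAt).unique
    (hrhs.congr_of_eventuallyEq (.of_forall hpair)))

theorem symplecticForm_fderiv_symplecticEuler (hH : ContDiff ℝ 2 H)
    (hφ : DifferentiableAt ℝ (fun w => (Q w, P w)) z)
    (hQ : ∀ w, Q w = w.1 + h • gradient (fun p => H (Q w, p)) w.2)
    (hP : ∀ w, P w = w.2 - h • gradient (fun q => H (q, w.2)) (Q w)) (u v : E × E) :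
    symplecticForm (fderiv ℝ (fun w => (Q w, P w)) z u) (fderiv ℝ (fun w => (Q w, P w)) z v) =
      symplecticForm u v := by
  rw [hφ.fst.fderiv_prodMk hφ.snd]
  exact symplecticForm_eq_of_linearized_symplecticEuler
    (hH.contDiffAt.isSymmSndFDerivAt minSmoothness_of_isRCLikeNormedField.le)
    (inner_fderiv_eq_of_eq_add_smul_gradient hH hφ.fst hQ)
    (inner_fderiv_eq_of_eq_sub_smul_gradient hH hφ.fst hφ.snd hP) u v

end

/-- The implicit first-order method (7.3) is a contact (symplectic) transformation:
if `Q(α,β) = α + h·∇₂H(Q(α,β), β)` and `P(α,β) = β − h·∇₁H(Q(α,β), β)` with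
`φ = (Q, P)` differentiable and `H` twice continuously differentiable, then the
derivative of `φ` preserves the standard symplectic form
`ω((a,b),(a',b')) = ⟪a,b'⟫ − ⟪b,a'⟫`. -/
theorem deVogelaere_method_7_3_contact
    (n : ℕ)
    (H : (EuclideanSpace ℝ (Fin n)) × (EuclideanSpace ℝ (Fin n)) → ℝ)
    (hH : ContDiff ℝ 2 H) (h : ℝ)
    (Q P : (EuclideanSpace ℝ (Fin n)) × (EuclideanSpace ℝ (Fin n)) →
      EuclideanSpace ℝ (Fin n))
    (hφ : Differentiable ℝ
      (fun z : (EuclideanSpace ℝ (Fin n)) × (EuclideanSpace ℝ (Fin n)) => (Q z, P z)))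
    (hQ : ∀ z : (EuclideanSpace ℝ (Fin n)) × (EuclideanSpace ℝ (Fin n)),
      Q z = z.1 + h • gradient (fun p => H (Q z, p)) z.2)
    (hP : ∀ z : (EuclideanSpace ℝ (Fin n)) × (EuclideanSpace ℝ (Fin n)),
      P z = z.2 - h • gradient (fun q => H (q, z.2)) (Q z)) :
    ∀ (z u v : (EuclideanSpace ℝ (Fin n)) × (EuclideanSpace ℝ (Fin n))),
      ⟪(fderiv ℝ (fun w => (Q w, P w)) z u).1, (fderiv ℝ (fun w => (Q w, P w)) z v).2⟫
        - ⟪(fderiv ℝ (fun w => (Q w, P w)) z u).2,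
            (fderiv ℝ (fun w => (Q w, P w)) z v).1⟫
      = ⟪u.1, v.2⟫ - ⟪u.2, v.1⟫ :=
  fun z => symplecticForm_fderiv_symplecticEuler hH (hφ z) hQ hP
end

section
/- Let n ∈ ℕ, let U : EuclideanSpace ℝ (Fin n) → ℝ be twice continuously differentiable (the time argument is a fixed parameter absorbed into U), and let h ∈ ℝ. Define the explicit map T : ℝⁿ × ℝⁿ → ℝⁿ × ℝⁿ by T(q, v) = (q₂, v₂), where q₁ = q + (h/2)·v, v₂ = v − h·∇U(q₁), and q₂ = q₁ + (h/2)·v₂. Then T is differentiable at every point and is a contact transformation: for every point z and all tangent vectors u, w in ℝⁿ × ℝⁿ, ω(DT(z)u, DT(z)w) = ω(u, w), where ω((a, b), (a', b')) = ⟨a, b'⟩ − ⟨b, a'⟩ is the standard symplectic form. -/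
open RealInnerProductSpace

/-!
Method (7.5) is the drift–kick–drift splitting `T = D ∘ K ∘ D` with the drift
`D (q, v) = (q + (h/2) • v, v)` and the kick `K (q, v) = (q, v - h • ∇U q)`.
The derivative of each factor preserves `ω`: for the drift because `ω` only picks up the
antisymmetrisation of `⟪b, b'⟫`, for the kick because its derivative
`(a, b) ↦ (a, b - h • H a)` involves the Hessian `H` of `U`, which is symmetric for `C²` `U`.
The chain rule then gives the claim for `T`.
-/

namespace Symplectic

variable {E : Type*} [NormedAddCommGroup E] [InnerProductSpace ℝ E]

def form (x y : E × E) : ℝ := ⟪x.1, y.2⟫ - ⟪x.2, y.1⟫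

def PreservesForm (L : E × E →L[ℝ] E × E) : Prop :=
  ∀ x y, form (L x) (L y) = form x y

theorem PreservesForm.comp {L M : E × E →L[ℝ] E × E} (hL : PreservesForm L)
    (hM : PreservesForm M) : PreservesForm (L.comp M) := fun x y => (hL (M x) (M y)).trans (hM x y)

def drift (c : ℝ) : E × E →L[ℝ] E × E :=
  (ContinuousLinearMap.fst ℝ E E + c • ContinuousLinearMap.snd ℝ E E).prod
    (ContinuousLinearMap.snd ℝ E E)

@[simp]
theorem drift_apply (c : ℝ) (z : E × E) : drift c z = (z.1 + c • z.2, z.2) := rfl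

theorem preservesForm_drift (c : ℝ) : PreservesForm (drift c : E × E →L[ℝ] E × E) := by
  intro x y
  simp only [form, drift_apply, inner_add_left, inner_add_right, real_inner_smul_left,
    real_inner_smul_right]
  ring

def kick (F : E → E) (z : E × E) : E × E := (z.1, z.2 - F z.1)

def kickDeriv (B : E →L[ℝ] E) : E × E →L[ℝ] E × E :=
  (ContinuousLinearMap.fst ℝ E E).prod
    (ContinuousLinearMap.snd ℝ E E - B.comp (ContinuousLinearMap.fst ℝ E E))

theorem hasFDerivAt_kick {F : E → E} {B : E →L[ℝ] E} {z : E × E} (hF : HasFDerivAt F B z.1) :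
    HasFDerivAt (kick F) (kickDeriv B) z :=
  hasFDerivAt_fst.prodMk (hasFDerivAt_snd.sub (hF.comp z hasFDerivAt_fst))

theorem preservesForm_kickDeriv {B : E →L[ℝ] E} (hB : (B : E →ₗ[ℝ] E).IsSymmetric) :
    PreservesForm (kickDeriv B) := by
  intro x y
  have hB_x_y := hB x.1 y.1
  simp only [form, kickDeriv, ContinuousLinearMap.prod_apply, sub_apply,
    ContinuousLinearMap.coe_fst', ContinuousLinearMap.coe_snd', ContinuousLinearMap.comp_apply,
    inner_sub_left, inner_sub_right, ContinuousLinearMap.coe_coe] at hB_x_y ⊢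
  rw [hB_x_y]
  ring

def driftKickDrift (c : ℝ) (F : E → E) : E × E → E × E :=
  drift c ∘ kick F ∘ drift c

theorem hasFDerivAt_driftKickDrift {c : ℝ} {F : E → E} {B : E →L[ℝ] E} {z : E × E}
    (hF : HasFDerivAt F B (drift c z).1) :
    HasFDerivAt (driftKickDrift c F) ((drift c).comp ((kickDeriv B).comp (drift c))) z :=
  (drift (E := E) c).hasFDerivAt.comp z
    ((hasFDerivAt_kick hF).comp z (drift (E := E) c).hasFDerivAt)

end Symplectic

theorem ContDiffAt.exists_hasFDerivAt_gradient_isSymmetric {E : Type*} [NormedAddCommGroup E]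
    [InnerProductSpace ℝ E] [CompleteSpace E] {U : E → ℝ} {x : E}
    (hU : ContDiffAt ℝ 2 U x) :
    ∃ B : E →L[ℝ] E, HasFDerivAt (gradient U) B x ∧ (B : E →ₗ[ℝ] E).IsSymmetric := by
  let toGrad : StrongDual ℝ E →L[ℝ] E :=
    (InnerProductSpace.toDual ℝ E).symm.toContinuousLinearEquiv.toContinuousLinearMap
  have hU' : DifferentiableAt ℝ (fderiv ℝ U) x :=
    (hU.fderiv_right (m := 1) (by norm_num)).differentiableAt one_ne_zero
  refine ⟨toGrad.comp (fderiv ℝ (fderiv ℝ U) x), toGrad.hasFDerivAt.comp x hU'.hasFDerivAt, ?_⟩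
  intro v w
  have hsymm := hU.isSymmSndFDerivAt (by simp) w v
  rw [real_inner_comm _ v]
  exact InnerProductSpace.toDual_symm_apply.trans
    (hsymm.symm.trans InnerProductSpace.toDual_symm_apply.symm)

open Symplectic in
/-- The explicit second-order method (7.5) is a contact (symplectic) transformation:
with `q₁ = q + (h/2)·v`, `v₂ = v − h·∇U(q₁)`, `q₂ = q₁ + (h/2)·v₂`, the map
`T(q, v) = (q₂, v₂)` is everywhere differentiable and its derivative preserves the
standard symplectic form `ω((a,b),(a',b')) = ⟪a,b'⟫ − ⟪b,a'⟫`. -/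
theorem deVogelaere_method_7_5_contact
    (n : ℕ)
    (U : EuclideanSpace ℝ (Fin n) → ℝ) (hU : ContDiff ℝ 2 U) (h : ℝ)
    (T : (EuclideanSpace ℝ (Fin n)) × (EuclideanSpace ℝ (Fin n)) →
      (EuclideanSpace ℝ (Fin n)) × (EuclideanSpace ℝ (Fin n)))
    (hT : ∀ q v : EuclideanSpace ℝ (Fin n),
      T (q, v) =
        ((q + (h / 2) • v) +
            (h / 2) • (v - h • gradient U (q + (h / 2) • v)),
          v - h • gradient U (q + (h / 2) • v))) :
    (∀ z : (EuclideanSpace ℝ (Fin n)) × (EuclideanSpace ℝ (Fin n)),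
      DifferentiableAt ℝ T z) ∧
    (∀ (z u w : (EuclideanSpace ℝ (Fin n)) × (EuclideanSpace ℝ (Fin n))),
      ⟪(fderiv ℝ T z u).1, (fderiv ℝ T z w).2⟫ - ⟪(fderiv ℝ T z u).2, (fderiv ℝ T z w).1⟫
        = ⟪u.1, w.2⟫ - ⟪u.2, w.1⟫) := by
  have hT_eq : T = driftKickDrift (h / 2) (fun q => h • gradient U q) := by
    funext ⟨q, v⟩
    exact hT q v
  have hDT : ∀ z, ∃ L, HasFDerivAt T L z ∧ PreservesForm L := by
    intro z
    obtain ⟨B, hB, hB_symm⟩ :=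
      hU.contDiffAt.exists_hasFDerivAt_gradient_isSymmetric (x := (drift (h / 2) z).1)
    refine ⟨_, hT_eq ▸ hasFDerivAt_driftKickDrift (hB.const_smul h), ?_⟩
    exact (preservesForm_drift _).comp
      ((preservesForm_kickDeriv (hB_symm.smul (conj_trivial h))).comp (preservesForm_drift _))
  refine ⟨fun z => (hDT z).choose_spec.1.differentiableAt, fun z u w => ?_⟩
  obtain ⟨L, hL, hL_preservesForm⟩ := hDT z
  rw [hL.fderiv]
  exact hL_preservesForm u w
end

section
/- Let n ∈ ℕ, let U : (EuclideanSpace ℝ (Fin n)) × ℝ → ℝ be twice continuously differentiable, and let q : ℝ → EuclideanSpace ℝ (Fin n) be three times continuously differentiable on a neighborhood of t₀ with q''(t) = −∇_q U(q(t), t) there. Write q₀ = q(t₀), v₀ = q'(t₀), and for each h ∈ ℝ set q₁(h) = q₀ + (h/2)·v₀, v₂(h) = v₀ − h·∇_q U(q₁(h), t₀ + h/2), q₂(h) = q₁(h) + (h/2)·v₂(h). Then the method is second order: as h → 0, ‖q₂(h) − q(t₀ + h)‖ = o(h²) and ‖v₂(h) − q'(t₀ + h)‖ = o(h²). -/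
/-!
With `F = -∇_q U` and `φ h = F (q₀ + (h/2) v₀, t₀ + h/2)`, the Newton equation gives
`φ 0 = q̈ t₀`, and differentiating it along the solution gives `φ' 0 = q⃛ t₀ / 2`. Hence the
position error is `(h²/2)(φ h - φ 0)` minus the second-order Taylor remainder of `q`, and the
velocity error is `h (φ h - φ 0 - h φ' 0)` minus the second-order Taylor remainder of `q̇`;
each term is `o(h²)`.
-/

open Asymptotics Filter Topology

variable {E : Type*} [NormedAddCommGroup E] [NormedSpace ℝ E]

theorem isLittleO_taylor_two_s19 {f : ℝ → E} {a : ℝ} (hf : ∀ᶠ x in 𝓝 a, DifferentiableAt ℝ f x)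
    (hf' : DifferentiableAt ℝ (deriv f) a) :
    (fun h : ℝ => f (a + h) - f a - h • deriv f a - (h ^ 2 / 2) • deriv (deriv f) a)
      =o[𝓝 0] fun h => h ^ 2 := by
  obtain ⟨ε, hε, hball⟩ := Metric.eventually_nhds_iff_ball.1 hf
  set g : ℝ → E := fun x =>
    f x - f a - (x - a) • deriv f a - ((x - a) ^ 2 / 2) • deriv (deriv f) a
  have hg : ∀ x ∈ Metric.ball a ε, HasDerivWithinAt g
      (deriv f x - deriv f a - (x - a) • deriv (deriv f) a) (Metric.ball a ε) x := by
    intro x hx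
    have hsq : HasDerivAt (fun x : ℝ => (x - a) ^ 2 / 2) (x - a) x :=
      ((((hasDerivAt_id' x).sub_const a).fun_pow 2).div_const 2).congr_deriv (by ring)
    exact (((hball x hx).hasDerivAt.sub_const (f a)).sub
      (((hasDerivAt_id x).sub_const a).smul_const (deriv f a) |>.congr_deriv (one_smul ℝ _))
      |>.sub (hsq.smul_const _)).hasDerivWithinAt
  have hg' : (fun x => deriv f x - deriv f a - (x - a) • deriv (deriv f) a)
      =o[𝓝[Metric.ball a ε] a] fun x => (x - a) ^ 1 := by
    simpa using (hasDerivAt_iff_isLittleO.1 hf'.hasDerivAt).mono nhdsWithin_le_nhds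
  have key := (convex_ball a ε).isLittleO_pow_succ_real (Metric.mem_ball_self hε) hg hg'
  rw [Metric.isOpen_ball.nhdsWithin_eq (Metric.mem_ball_self hε)] at key
  have hshift : Tendsto (fun h : ℝ => a + h) (𝓝 0) (𝓝 a) :=
    (continuous_const_add a).tendsto' 0 a (add_zero a)
  simpa [g, Function.comp_def] using key.comp_tendsto hshift

/-- `F` is the force field of `q̈ = F (q, t)`; method (7.5) is the case `F = -∇_q U`. -/
noncomputable def deVogelaereVelocity (F : E × ℝ → E) (t₀ : ℝ) (q₀ v₀ : E) (h : ℝ) : E :=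
  v₀ + h • F (q₀ + (h / 2) • v₀, t₀ + h / 2)

noncomputable def deVogelaerePosition (F : E × ℝ → E) (t₀ : ℝ) (q₀ v₀ : E) (h : ℝ) : E :=
  q₀ + (h / 2) • v₀ + (h / 2) • deVogelaereVelocity F t₀ q₀ v₀ h

theorem hasDerivAt_comp_halfStep {F : E × ℝ → E} {t₀ : ℝ} {q₀ v₀ : E}
    (hF : DifferentiableAt ℝ F (q₀, t₀)) :
    HasDerivAt (fun h : ℝ => F (q₀ + (h / 2) • v₀, t₀ + h / 2))
      ((1 / 2 : ℝ) • fderiv ℝ F (q₀, t₀) (v₀, 1)) 0 := by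
  have hline : HasDerivAt (fun h : ℝ => (q₀ + (h / 2) • v₀, t₀ + h / 2))
      ((1 / 2 : ℝ) • (v₀, (1 : ℝ))) 0 := by
    have h₁ := (((hasDerivAt_id' (0 : ℝ)).div_const 2).smul_const v₀).const_add q₀
    have h₂ := ((hasDerivAt_id' (0 : ℝ)).div_const 2).const_add t₀
    simpa [Prod.smul_mk, one_div] using h₁.prodMk h₂
  rw [← map_smul]
  exact hF.hasFDerivAt.comp_hasDerivAt_of_eq 0 hline (by simp)

theorem hasDerivAt_deriv_deriv_of_ode {F : E × ℝ → E} {q : ℝ → E} {t₀ : ℝ}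
    (hF : DifferentiableAt ℝ F (q t₀, t₀)) (hq : DifferentiableAt ℝ q t₀)
    (hode : ∀ᶠ t in 𝓝 t₀, deriv (deriv q) t = F (q t, t)) :
    HasDerivAt (deriv (deriv q)) (fderiv ℝ F (q t₀, t₀) (deriv q t₀, 1)) t₀ :=
  (HasFDerivAt.comp_hasDerivAt (f := fun t => (q t, t)) t₀ hF.hasFDerivAt
    (hq.hasDerivAt.prodMk (hasDerivAt_id t₀))).congr_of_eventuallyEq hode

theorem deVogelaerePosition_sub_isLittleO {F : E × ℝ → E} {q : ℝ → E} {t₀ : ℝ}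
    (hF : DifferentiableAt ℝ F (q t₀, t₀)) (hq : ∀ᶠ t in 𝓝 t₀, DifferentiableAt ℝ q t)
    (hq' : DifferentiableAt ℝ (deriv q) t₀) (hode : deriv (deriv q) t₀ = F (q t₀, t₀)) :
    (fun h => deVogelaerePosition F t₀ (q t₀) (deriv q t₀) h - q (t₀ + h)) =o[𝓝 0]
      fun h => h ^ 2 := by
  set φ : ℝ → E := fun h => F (q t₀ + (h / 2) • deriv q t₀, t₀ + h / 2)
  have hφ : (fun h => φ h - φ 0) =o[𝓝 0] fun _ => (1 : ℝ) :=
    (isLittleO_one_iff ℝ).2 <| tendsto_sub_nhds_zero_iff.2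
      (hasDerivAt_comp_halfStep (v₀ := deriv q t₀) hF).continuousAt
  have hsq : (fun h : ℝ => h ^ 2 / 2) =O[𝓝 0] fun h => h ^ 2 :=
    ((isBigO_refl (fun h : ℝ => h ^ 2) _).const_mul_left (1 / 2)).congr_left fun h => by ring
  have herror : ∀ h, deVogelaerePosition F t₀ (q t₀) (deriv q t₀) h - q (t₀ + h) =
      (h ^ 2 / 2) • (φ h - φ 0) -
        (q (t₀ + h) - q t₀ - h • deriv q t₀ - (h ^ 2 / 2) • deriv (deriv q) t₀) := by
    intro h
    simp only [deVogelaerePosition, deVogelaereVelocity, hode, φ, smul_add, zero_div, zero_smul,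
      add_zero]
    module
  have hcomp : (fun h : ℝ => (h ^ 2 / 2) • (φ h - φ 0)) =o[𝓝 0] fun h => h ^ 2 := by
    simpa using hsq.smul_isLittleO hφ
  simp only [herror]
  exact hcomp.sub (isLittleO_taylor_two_s19 hq hq')

theorem deVogelaereVelocity_sub_isLittleO {F : E × ℝ → E} {q : ℝ → E} {t₀ : ℝ}
    (hF : DifferentiableAt ℝ F (q t₀, t₀)) (hq : DifferentiableAt ℝ q t₀)
    (hq' : ∀ᶠ t in 𝓝 t₀, DifferentiableAt ℝ (deriv q) t)
    (hode : ∀ᶠ t in 𝓝 t₀, deriv (deriv q) t = F (q t, t)) :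
    (fun h => deVogelaereVelocity F t₀ (q t₀) (deriv q t₀) h - deriv q (t₀ + h)) =o[𝓝 0]
      fun h => h ^ 2 := by
  set φ : ℝ → E := fun h => F (q t₀ + (h / 2) • deriv q t₀, t₀ + h / 2)
  set c := fderiv ℝ F (q t₀, t₀) (deriv q t₀, 1)
  have hφ : (fun h => φ h - φ 0 - h • ((1 / 2 : ℝ) • c)) =o[𝓝 0] fun h => h := by
    simpa [φ, c] using
      hasDerivAt_iff_isLittleO.1 (hasDerivAt_comp_halfStep (v₀ := deriv q t₀) hF)
  have hq''' := hasDerivAt_deriv_deriv_of_ode hF hq hode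
  have herror : ∀ h, deVogelaereVelocity F t₀ (q t₀) (deriv q t₀) h - deriv q (t₀ + h) =
      h • (φ h - φ 0 - h • ((1 / 2 : ℝ) • c)) -
        (deriv q (t₀ + h) - deriv q t₀ - h • deriv (deriv q) t₀ -
          (h ^ 2 / 2) • deriv (deriv (deriv q)) t₀) := by
    intro h
    simp only [deVogelaereVelocity, hode.self_of_nhds, hq'''.deriv, φ, zero_div, zero_smul,
      add_zero, one_div]
    module
  have hcomp : (fun h : ℝ => h • (φ h - φ 0 - h • ((1 / 2 : ℝ) • c))) =o[𝓝 0]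
      fun h => h ^ 2 := by
    simpa [sq] using (isBigO_refl (fun h : ℝ => h) _).smul_isLittleO hφ
  simp only [herror]
  exact hcomp.sub (isLittleO_taylor_two_s19 hq' hq'''.differentiableAt)

theorem contDiff_gradient_left {H P : Type*} [NormedAddCommGroup H] [InnerProductSpace ℝ H]
    [CompleteSpace H] [NormedAddCommGroup P] [NormedSpace ℝ P] {U : H × P → ℝ}
    {k : WithTop ℕ∞} (hU : ContDiff ℝ (k + 1) U) :
    ContDiff ℝ k fun p : H × P => gradient (fun x => U (x, p.2)) p.1 :=
  (InnerProductSpace.toDual ℝ H).symm.contDiff.comp <|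
    ContDiff.fderiv (f := fun p x => U (x, p.2))
      (hU.comp (contDiff_snd.prodMk contDiff_fst.snd)) contDiff_fst le_rfl

/-- Method (7.5) is second order: if `q'' (t) = −∇_q U(q(t), t)` near `t₀` with `q`
three times continuously differentiable there and `U` twice continuously
differentiable, then with `q₁(h) = q₀ + (h/2)·v₀`,
`v₂(h) = v₀ − h·∇_q U(q₁(h), t₀ + h/2)`, `q₂(h) = q₁(h) + (h/2)·v₂(h)`, one has
`‖q₂(h) − q(t₀ + h)‖ = o(h²)` and `‖v₂(h) − q'(t₀ + h)‖ = o(h²)` as `h → 0`. -/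
theorem deVogelaere_method_7_5_second_order
    (n : ℕ)
    (U : (EuclideanSpace ℝ (Fin n)) × ℝ → ℝ) (hU : ContDiff ℝ 2 U) (t₀ : ℝ)
    (q : ℝ → EuclideanSpace ℝ (Fin n)) (s : Set ℝ) (hs : s ∈ nhds t₀)
    (hq : ContDiffOn ℝ 3 q s)
    (hode : ∀ t ∈ s,
      deriv (deriv q) t = - gradient (fun x => U (x, t)) (q t))
    (q₁ v₂ q₂ : ℝ → EuclideanSpace ℝ (Fin n))
    (hq₁ : ∀ h : ℝ, q₁ h = q t₀ + (h / 2) • deriv q t₀)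
    (hv₂ : ∀ h : ℝ,
      v₂ h = deriv q t₀ - h • gradient (fun x => U (x, t₀ + h / 2)) (q₁ h))
    (hq₂ : ∀ h : ℝ, q₂ h = q₁ h + (h / 2) • v₂ h) :
    ((fun h : ℝ => ‖q₂ h - q (t₀ + h)‖) =o[nhds 0] fun h : ℝ => h ^ 2) ∧
    ((fun h : ℝ => ‖v₂ h - deriv q (t₀ + h)‖) =o[nhds 0] fun h : ℝ => h ^ 2) := by
  set F : EuclideanSpace ℝ (Fin n) × ℝ → EuclideanSpace ℝ (Fin n) :=
    fun p => -gradient (fun x => U (x, p.2)) p.1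
  have hF : DifferentiableAt ℝ F (q t₀, t₀) :=
    ((contDiff_gradient_left (k := 1) hU).differentiable one_ne_zero _).neg
  have hv₂F : v₂ = deVogelaereVelocity F t₀ (q t₀) (deriv q t₀) := by
    ext1 h; simp [hv₂, hq₁, deVogelaereVelocity, F, sub_eq_add_neg]
  have hq₂F : q₂ = deVogelaerePosition F t₀ (q t₀) (deriv q t₀) := by
    ext1 h; rw [hq₂, hq₁, hv₂F, deVogelaerePosition]
  have hint : interior s ∈ 𝓝 t₀ := interior_mem_nhds.2 hs
  have hdq : ContDiffOn ℝ 2 (deriv q) (interior s) :=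
    (hq.mono interior_subset).deriv_of_isOpen isOpen_interior (by norm_num)
  have hq_diff : ∀ᶠ t in 𝓝 t₀, DifferentiableAt ℝ q t :=
    (eventually_mem_nhds_iff.2 hs).mono fun t ht =>
      (hq.contDiffAt ht).differentiableAt (by norm_num)
  have hdq_diff : ∀ᶠ t in 𝓝 t₀, DifferentiableAt ℝ (deriv q) t := by
    filter_upwards [hint] with t ht
    exact (hdq.differentiableOn (by norm_num) t ht).differentiableAt (isOpen_interior.mem_nhds ht)
  have hodeF : ∀ᶠ t in 𝓝 t₀, deriv (deriv q) t = F (q t, t) := mem_of_superset hs hode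
  rw [hq₂F, hv₂F]
  exact ⟨(deVogelaerePosition_sub_isLittleO hF hq_diff hdq_diff.self_of_nhds
      hodeF.self_of_nhds).norm_left,
    (deVogelaereVelocity_sub_isLittleO hF hq_diff.self_of_nhds hdq_diff hodeF).norm_left⟩
end
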